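/- arXiv:1705.00762 — 13 statements merged into one kernel-verified Lean document; each statement's English description precedes it below -/
import Mathlib

section
/- Let A ⊂ B be an extension of finite-dimensional algebras over a field K such that A is maximal in B. Then A + J(A)·B = A and A + B·J(A) = A, where J(A) denotes the Jacobson radical of A. -/
/-!
Write `J` for the image of the Jacobson radical of `A` in `B`. The subspace `A + J·B` is closed
under multiplication, hence a subalgebra containing `A`; by maximality it is `A` or `B`. If it
were `B`, then `B = A + J·B = A + J·(A + J·B) ⊆ A + J²·B ⊆ ⋯ ⊆ A + Jⁿ·B = A`, because `J` is
nilpotent (`A` is Artinian), contradicting `A ≠ B`. The same argument works for `A + B·J`, using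
that `J` is a two-sided ideal.
-/

section IdemSemiring

variable {α : Type*} [IdemSemiring α] {x a i : α}

theorem le_of_le_sup_nilpotent_mul (hx : x ≤ a ⊔ i * x) (ha : i * a ≤ a)
    (hi : IsNilpotent i) : x ≤ a := by
  have hpow : ∀ k : ℕ, x ≤ a ⊔ i ^ k * x := by
    intro k
    induction k with
    | zero => simp
    | succ k ih =>
      calc x ≤ a ⊔ i * x := hx
        _ ≤ a ⊔ i * (a ⊔ i ^ k * x) := sup_le_sup_left (mul_le_mul_right ih i) a
        _ = a ⊔ (i * a ⊔ i ^ (k + 1) * x) := by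
          rw [← add_eq_sup a (i ^ k * x), mul_add, add_eq_sup, ← mul_assoc, ← pow_succ']
        _ ≤ a ⊔ i ^ (k + 1) * x := sup_le le_sup_left (sup_le_sup_right ha _)
  obtain ⟨n, hn⟩ := hi
  simpa [hn] using hpow n

theorem le_of_le_sup_mul_nilpotent (hx : x ≤ a ⊔ x * i) (ha : a * i ≤ a)
    (hi : IsNilpotent i) : x ≤ a := by
  have hpow : ∀ k : ℕ, x ≤ a ⊔ x * i ^ k := by
    intro k
    induction k with
    | zero => simp
    | succ k ih =>
      calc x ≤ a ⊔ x * i := hx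
        _ ≤ a ⊔ (a ⊔ x * i ^ k) * i := sup_le_sup_left (mul_le_mul_left ih i) a
        _ = a ⊔ (a * i ⊔ x * i ^ (k + 1)) := by
          rw [← add_eq_sup a (x * i ^ k), add_mul, add_eq_sup, mul_assoc, ← pow_succ]
        _ ≤ a ⊔ x * i ^ (k + 1) := sup_le le_sup_left (sup_le_sup_right ha _)
  obtain ⟨n, hn⟩ := hi
  simpa [hn] using hpow n

end IdemSemiring

namespace Subalgebra

variable {K B : Type*} [CommSemiring K] [Semiring B] [Algebra K B]

theorem toSubmodule_mul_self_le (A : Subalgebra K B) :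
    toSubmodule A * toSubmodule A ≤ toSubmodule A := by
  simpa using A.mul_toSubmodule_le A

theorem le_toSubmodule_of_isCoatom {A : Subalgebra K B} (hA : IsCoatom A) {I : Submodule K B}
    (hAI : toSubmodule A * I ≤ I) (hIA : I * toSubmodule A ≤ I) (hII : I * I ≤ I)
    (hne : toSubmodule A ⊔ I ≠ ⊤) : I ≤ toSubmodule A := by
  set P := toSubmodule A ⊔ I
  have hPP : P * P ≤ P := by
    simp only [P, Submodule.mul_sup, Submodule.sup_mul]
    exact sup_le (sup_le (A.toSubmodule_mul_self_le.trans le_sup_left) (hIA.trans le_sup_right))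
      (sup_le (hAI.trans le_sup_right) (hII.trans le_sup_right))
  let S := P.toSubalgebra (Submodule.mem_sup_left A.one_mem)
    fun _ _ hx hy => hPP (Submodule.mul_mem_mul hx hy)
  have hS : S = A := (hA.le_iff_eq fun h => hne (congrArg toSubmodule h)).mp
    fun _ hx => Submodule.mem_sup_left hx
  calc I ≤ P := le_sup_right
    _ = toSubmodule A := by rw [← hS]; rfl

variable (A : Subalgebra K B) (I : Ideal A)

noncomputable def imageIdeal : Submodule K B :=
  (I.restrictScalars K).map A.val.toLinearMap

variable {A I}

theorem mem_imageIdeal {x : B} : x ∈ A.imageIdeal I ↔ ∃ j ∈ I, (j : B) = x := by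
  simp [imageIdeal]

theorem imageIdeal_le_toSubmodule : A.imageIdeal I ≤ toSubmodule A := by
  rintro _ ⟨j, -, rfl⟩
  exact j.2

theorem toSubmodule_mul_imageIdeal_le : toSubmodule A * A.imageIdeal I ≤ A.imageIdeal I :=
  Submodule.mul_le.mpr fun a ha _ hx => by
    obtain ⟨j, hj, rfl⟩ := mem_imageIdeal.mp hx
    exact mem_imageIdeal.mpr ⟨⟨a, ha⟩ * j, I.mul_mem_left _ hj, rfl⟩

theorem imageIdeal_mul_toSubmodule_le [I.IsTwoSided] :
    A.imageIdeal I * toSubmodule A ≤ A.imageIdeal I :=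
  Submodule.mul_le.mpr fun _ hx a ha => by
    obtain ⟨j, hj, rfl⟩ := mem_imageIdeal.mp hx
    exact mem_imageIdeal.mpr ⟨j * ⟨a, ha⟩, I.mul_mem_right _ hj, rfl⟩

theorem isNilpotent_imageIdeal (hI : IsNilpotent I) : IsNilpotent (A.imageIdeal I) := by
  obtain ⟨n, hn⟩ := hI
  refine ⟨n + 1, ?_⟩
  rw [imageIdeal, ← Submodule.map_pow, ← Submodule.restrictScalars_pow n.succ_ne_zero,
    Submodule.pow_succ, hn, zero_mul]
  simp

theorem span_mul_eq_imageIdeal_mul_top :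
    Submodule.span K {x : B | ∃ j : A, j ∈ I ∧ ∃ b : B, x = (j : B) * b} =
      A.imageIdeal I * ⊤ := by
  refine le_antisymm (Submodule.span_le.mpr ?_) (Submodule.mul_le.mpr fun _ hx b _ => ?_)
  · rintro _ ⟨j, hj, b, rfl⟩
    exact Submodule.mul_mem_mul (mem_imageIdeal.mpr ⟨j, hj, rfl⟩) Submodule.mem_top
  · obtain ⟨j, hj, rfl⟩ := mem_imageIdeal.mp hx
    exact Submodule.subset_span ⟨j, hj, b, rfl⟩

theorem span_mul_eq_top_mul_imageIdeal :
    Submodule.span K {x : B | ∃ j : A, j ∈ I ∧ ∃ b : B, x = b * (j : B)} =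
      ⊤ * A.imageIdeal I := by
  refine le_antisymm (Submodule.span_le.mpr ?_) (Submodule.mul_le.mpr fun b _ _ hx => ?_)
  · rintro _ ⟨j, hj, b, rfl⟩
    exact Submodule.mul_mem_mul Submodule.mem_top (mem_imageIdeal.mpr ⟨j, hj, rfl⟩)
  · obtain ⟨j, hj, rfl⟩ := mem_imageIdeal.mp hx
    exact Submodule.subset_span ⟨j, hj, b, rfl⟩

theorem toSubmodule_sup_imageIdeal_mul_top_eq (hA : IsCoatom A) (hI : IsNilpotent I) :
    toSubmodule A ⊔ A.imageIdeal I * ⊤ = toSubmodule A := by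
  set J := A.imageIdeal I
  have hJ_mul (X : Submodule K B) : J * ⊤ * X ≤ J * ⊤ := by
    rw [mul_assoc]
    exact mul_le_mul_right le_top J
  have hJA : J * toSubmodule A ≤ toSubmodule A :=
    (mul_le_mul_left imageIdeal_le_toSubmodule _).trans A.toSubmodule_mul_self_le
  refine sup_eq_left.mpr (le_toSubmodule_of_isCoatom hA ?_ (hJ_mul _) (hJ_mul _) fun h => ?_)
  · rw [← mul_assoc]
    exact mul_le_mul_left toSubmodule_mul_imageIdeal_le ⊤
  · refine hA.ne_top (Algebra.toSubmodule_eq_top.mp (top_le_iff.mp ?_))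
    exact le_of_le_sup_nilpotent_mul h.ge hJA (isNilpotent_imageIdeal hI)

theorem toSubmodule_sup_top_mul_imageIdeal_eq [I.IsTwoSided] (hA : IsCoatom A)
    (hI : IsNilpotent I) : toSubmodule A ⊔ ⊤ * A.imageIdeal I = toSubmodule A := by
  set J := A.imageIdeal I
  have hmul_J (X : Submodule K B) : X * (⊤ * J) ≤ ⊤ * J := by
    rw [← mul_assoc]
    exact mul_le_mul_left le_top J
  have hAJ : toSubmodule A * J ≤ toSubmodule A :=
    (mul_le_mul_right imageIdeal_le_toSubmodule _).trans A.toSubmodule_mul_self_le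
  refine sup_eq_left.mpr (le_toSubmodule_of_isCoatom hA (hmul_J _) ?_ (hmul_J _) fun h => ?_)
  · rw [mul_assoc]
    exact mul_le_mul_right imageIdeal_mul_toSubmodule_le ⊤
  · refine hA.ne_top (Algebra.toSubmodule_eq_top.mp (top_le_iff.mp ?_))
    exact le_of_le_sup_mul_nilpotent h.ge hAJ (isNilpotent_imageIdeal hI)

end Subalgebra

/-- If `A` is a maximal subalgebra of a finite-dimensional algebra `B`,
then `A + J(A)·B = A` and `A + B·J(A) = A`. -/
theorem stmt1 {K B : Type*} [Field K] [Ring B] [Algebra K B] [FiniteDimensional K B]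
    (A : Subalgebra K B) (hmax : IsCoatom A) :
    (Subalgebra.toSubmodule A ⊔ Submodule.span K
        {x : B | ∃ j : A, j ∈ Ideal.jacobson (⊥ : Ideal A) ∧ ∃ b : B, x = (j : B) * b}
      = Subalgebra.toSubmodule A)
    ∧ (Subalgebra.toSubmodule A ⊔ Submodule.span K
        {x : B | ∃ j : A, j ∈ Ideal.jacobson (⊥ : Ideal A) ∧ ∃ b : B, x = b * (j : B)}
      = Subalgebra.toSubmodule A) := by
  have : IsArtinianRing A := IsArtinianRing.of_finite K A
  have hJ := IsArtinianRing.isNilpotent_jacobson_bot (R := A)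
  rw [Subalgebra.span_mul_eq_imageIdeal_mul_top, Subalgebra.span_mul_eq_top_mul_imageIdeal]
  exact ⟨Subalgebra.toSubmodule_sup_imageIdeal_mul_top_eq hmax hJ,
    Subalgebra.toSubmodule_sup_top_mul_imageIdeal_eq hmax hJ⟩
end

section
/- Let A be a maximal subalgebra of a finite-dimensional K-algebra B with J(B) ⊄ A. Then A + J(B) = B and J(A) = A ∩ J(B), and the quotient map induces an isomorphism of algebras A/J(A) ≅ B/J(B). -/
/-!
`A + J(B)` is a subalgebra of `B` (the preimage of the image of `A` in `B/J(B)`) strictly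
containing `A`, hence equal to `B`. For the radicals, use that `x ∈ J(R)` as soon as every `y * x`
is nilpotent, and that the radical of an Artinian ring is nilpotent. If `a ∈ A ∩ J(B)`, every
`y * a` with `y ∈ A` is nilpotent in `B`, hence in `A`. If `a ∈ J(A)` and `b = a' + j` with
`a' ∈ A`, `j ∈ J(B)`, then `b * a ≡ a' * a` modulo the nil ideal `J(B)` and `a' * a` is nilpotent,
so `b * a` is nilpotent.
-/

namespace Ideal

variable {R : Type*} [Ring R]

theorem mem_jacobson_bot_of_forall_isNilpotent_mul {x : R} (h : ∀ y, IsNilpotent (y * x)) :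
    x ∈ jacobson (⊥ : Ideal R) :=
  mem_jacobson_iff.2 fun y => by
    obtain ⟨u, hu⟩ := (h y).isUnit_add_one
    exact ⟨↑u⁻¹, by rw [mem_bot, mul_assoc, ← mul_add_one, ← hu, Units.inv_mul, sub_self]⟩

theorem isNilpotent_of_sub_mem {I : Ideal R} [I.IsTwoSided] (hI : ∀ z ∈ I, IsNilpotent z)
    {x y : R} (hxy : x - y ∈ I) (hy : IsNilpotent y) : IsNilpotent x := by
  obtain ⟨n, hn⟩ := hy
  have hxn : x ^ n ∈ I := by
    rw [← Quotient.eq_zero_iff_mem, map_pow, Quotient.eq.2 hxy, ← map_pow, hn, map_zero]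
  obtain ⟨m, hm⟩ := hI _ hxn
  exact ⟨n * m, by rw [pow_mul, hm]⟩

end Ideal

theorem IsArtinianRing.isNilpotent_of_mem_jacobson_bot {R : Type*} [Ring R] [IsArtinianRing R]
    {x : R} (hx : x ∈ Ideal.jacobson (⊥ : Ideal R)) : IsNilpotent x := by
  obtain ⟨n, hn⟩ := IsArtinianRing.isNilpotent_jacobson_bot (R := R)
  exact ⟨n, by simpa [hn] using Ideal.pow_mem_pow hx n⟩

namespace RingHom

variable {R S : Type*} [Ring R] [Ring S] (f : R →+* S) {x : R}

theorem mem_jacobson_bot_of_map_mem [IsArtinianRing S] (hf : Function.Injective f)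
    (hx : f x ∈ Ideal.jacobson (⊥ : Ideal S)) : x ∈ Ideal.jacobson (⊥ : Ideal R) :=
  Ideal.mem_jacobson_bot_of_forall_isNilpotent_mul fun y =>
    (IsNilpotent.map_iff hf).1 <| IsArtinianRing.isNilpotent_of_mem_jacobson_bot <| by
      rw [map_mul]; exact Ideal.mul_mem_left _ _ hx

theorem map_mem_jacobson_bot [IsArtinianRing R] [IsArtinianRing S]
    (hf : ∀ b, ∃ a, b - f a ∈ Ideal.jacobson (⊥ : Ideal S))
    (hx : x ∈ Ideal.jacobson (⊥ : Ideal R)) : f x ∈ Ideal.jacobson (⊥ : Ideal S) :=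
  Ideal.mem_jacobson_bot_of_forall_isNilpotent_mul fun b => by
    obtain ⟨a, ha⟩ := hf b
    refine Ideal.isNilpotent_of_sub_mem (fun _ => IsArtinianRing.isNilpotent_of_mem_jacobson_bot)
      (y := f (a * x)) ?_ ?_
    · rw [map_mul, ← sub_mul]; exact Ideal.mul_mem_right _ _ ha
    · exact (IsArtinianRing.isNilpotent_of_mem_jacobson_bot (Ideal.mul_mem_left _ a hx)).map f

end RingHom

theorem Subalgebra.exists_sub_mem_of_isCoatom {K B : Type*} [CommRing K] [Ring B] [Algebra K B]
    {A : Subalgebra K B} (hA : IsCoatom A) (I : Ideal B) [I.IsTwoSided] (hI : ¬ ∀ x ∈ I, x ∈ A)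
    (b : B) : ∃ a : A, b - a ∈ I := by
  let π := Ideal.Quotient.mkₐ K I
  have hlt : A < (A.map π).comap π := by
    refine lt_of_le_not_ge (fun a ha => ⟨a, ha, rfl⟩) fun hle => hI fun x hx => hle ?_
    exact ⟨0, A.zero_mem, by simp [π, Ideal.Quotient.eq_zero_iff_mem.2 hx]⟩
  obtain ⟨a, ha, hab⟩ : b ∈ (A.map π).comap π := hA.2 _ hlt ▸ Algebra.mem_top
  exact ⟨⟨a, ha⟩, Ideal.Quotient.eq.1 hab.symm⟩

/-- If `A` is a maximal subalgebra of a finite-dimensional algebra `B` with `J(B) ⊄ A`,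
then `A + J(B) = B`, `J(A) = A ∩ J(B)`, and the quotient map induces an isomorphism
`A/J(A) ≅ B/J(B)` (expressed by: the composite `A → B → B/J(B)` is surjective with
kernel `J(A)`). -/
theorem stmt2 {K B : Type*} [Field K] [Ring B] [Algebra K B] [FiniteDimensional K B]
    (A : Subalgebra K B) (hmax : IsCoatom A)
    (hJ : ¬ ∀ x ∈ Ideal.jacobson (⊥ : Ideal B), x ∈ A) :
    (Subalgebra.toSubmodule A ⊔
        Submodule.restrictScalars K (Ideal.jacobson (⊥ : Ideal B)) = ⊤)
    ∧ (∀ a : A, a ∈ Ideal.jacobson (⊥ : Ideal A) ↔ (a : B) ∈ Ideal.jacobson (⊥ : Ideal B))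
    ∧ (∀ b : B, ∃ a : A, b - (a : B) ∈ Ideal.jacobson (⊥ : Ideal B)) := by
  have : IsArtinianRing B := IsArtinianRing.of_finite K B
  have : IsArtinianRing A := IsArtinianRing.of_finite K A
  have hsurj := A.exists_sub_mem_of_isCoatom hmax _ hJ
  refine ⟨eq_top_iff.2 fun b _ => ?_, fun a => ⟨?_, ?_⟩, hsurj⟩
  · obtain ⟨a, ha⟩ := hsurj b
    exact Submodule.mem_sup.2 ⟨a, a.2, b - a, ha, add_sub_cancel _ _⟩
  · exact A.val.toRingHom.map_mem_jacobson_bot hsurj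
  · exact A.val.toRingHom.mem_jacobson_bot_of_map_mem Subtype.val_injective
end

section
/- Let D be a division ring, n ≥ 2, and 1 ≤ k < n. Then the subring B(k, n−k) of M_n(D) consisting of block upper-triangular matrices with diagonal blocks of sizes k and n−k is a maximal subring of M_n(D): any subring of M_n(D) properly containing B(k, n−k) equals M_n(D). -/
/-- The block upper-triangular subring `B(k, n-k)` is a maximal subring of `Mₙ(D)`:
any subring properly containing it is all of `Mₙ(D)`. -/
theorem stmt4 {D : Type*} [DivisionRing D] (n k : ℕ) (hn : 2 ≤ n) (hk1 : 1 ≤ k) (hkn : k < n)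
    (T : Subring (Matrix (Fin n) (Fin n) D))
    (hBT : ∀ X : Matrix (Fin n) (Fin n) D,
      (∀ i j : Fin n, k ≤ (i : ℕ) → (j : ℕ) < k → X i j = 0) → X ∈ T)
    (hproper : ∃ X ∈ T, ¬ ∀ i j : Fin n, k ≤ (i : ℕ) → (j : ℕ) < k → X i j = 0) :
    T = ⊤ := by
  obtain ⟨X, hXT, hX⟩ := hproper
  push_neg at hX
  obtain ⟨i₀, j₀, hi₀, hj₀, hx⟩ := hX
  have key : ∀ (i j : Fin n) (c : D), Matrix.single i j c ∈ T := by
    intro i j c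
    have hA : Matrix.single i i₀ (c * (X i₀ j₀)⁻¹) ∈ T := by
      apply hBT
      intro p q hp hq
      rw [Matrix.single]
      simp only [Matrix.of_apply]
      rw [if_neg]
      rintro ⟨rfl, rfl⟩
      omega
    have hB : Matrix.single j₀ j (1 : D) ∈ T := by
      apply hBT
      intro p q hp hq
      rw [Matrix.single]
      simp only [Matrix.of_apply]
      rw [if_neg]
      rintro ⟨rfl, rfl⟩
      omega
    have hprod : Matrix.single i i₀ (c * (X i₀ j₀)⁻¹) * X *
        Matrix.single j₀ j (1 : D) ∈ T := T.mul_mem (T.mul_mem hA hXT) hB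
    have heq : Matrix.single i i₀ (c * (X i₀ j₀)⁻¹) * X *
        Matrix.single j₀ j (1 : D) = Matrix.single i j c := by
      ext p q
      simp only [Matrix.mul_apply, Matrix.single, Matrix.of_apply]
      simp only [ite_mul, mul_ite, zero_mul, mul_zero, mul_one]
      by_cases hp : i = p <;> by_cases hq : j = q <;>
        simp [hp, hq, Finset.sum_ite_eq, mul_assoc, inv_mul_cancel₀ hx]
    rw [heq] at hprod
    exact hprod
  rw [eq_top_iff]
  intro M _
  rw [Matrix.matrix_eq_sum_single M]
  exact Subring.sum_mem T fun i _ => Subring.sum_mem T fun j _ => key i j (M i j)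
end

section
/- If A is a maximal subring of a ring B, then M_n(A) is a maximal subring of M_n(B) for every n ≥ 1. -/
/-!
A subring `S` of `Mₙ(B)` containing `Mₙ(A)` contains the matrix units `single i j 1`, and cutting
out entries with them shows `S = Mₙ(C)` for the ring `C` of all `b` with every `single i j b ∈ S`.
Hence the subrings above `Mₙ(A)` are the `Mₙ(C)` with `A ≤ C`, and since `C ↦ Mₙ(C)` is injective
for `n ≥ 1`, maximality of `A` transfers to `Mₙ(A)`.
-/

open Matrix

/-- The subring of `Mₙ(B)` of matrices with entries in a subring `A`. -/
def matrixSubring {B : Type*} [Ring B] (A : Subring B) (n : ℕ) :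
    Subring (Matrix (Fin n) (Fin n) B) where
  carrier := {X | ∀ i j, X i j ∈ A}
  zero_mem' := fun i j => by simpa using A.zero_mem
  one_mem' := fun i j => by
    by_cases h : i = j <;> simp [Matrix.one_apply, h, A.one_mem, A.zero_mem]
  add_mem' := fun hX hY i j => A.add_mem (hX i j) (hY i j)
  neg_mem' := fun hX i j => A.neg_mem (hX i j)
  mul_mem' := fun {X Y} hX hY i j => by
    rw [Matrix.mul_apply]
    exact Subring.sum_mem A fun l _ => A.mul_mem (hX i l) (hY l j)

namespace Subring

variable {R : Type*} [NonAssocRing R] {n : Type*} [Fintype n] [DecidableEq n]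

theorem single_mem_matrix_iff {A : Subring R} {i j : n} {b : R} :
    single i j b ∈ A.matrix ↔ b ∈ A :=
  Matrix.single_mem_matrix (S := (A : Set R)) A.zero_mem

theorem matrix_injective [Nonempty n] : Function.Injective (matrix (R := R) (n := n)) := by
  intro A A' h
  obtain ⟨i⟩ := ‹Nonempty n›
  ext b
  simpa only [single_mem_matrix_iff] using SetLike.ext_iff.1 h (single i i b)

theorem matrix_top : (⊤ : Subring R).matrix (n := n) = ⊤ :=
  eq_top_iff.2 fun _ _ _ _ => mem_top _

def entrySubring (S : Subring (Matrix n n R)) (hS : ∀ i j, single i j (1 : R) ∈ S) :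
    Subring R where
  carrier := {b | ∀ i j, single i j b ∈ S}
  zero_mem' i j := by simpa only [single_zero] using S.zero_mem
  one_mem' := hS
  add_mem' hb hc i j := by rw [single_add]; exact S.add_mem (hb i j) (hc i j)
  neg_mem' hb i j := by rw [← single_neg]; exact S.neg_mem (hb i j)
  mul_mem' hb hc i j := by
    rw [← single_mul_single_same (i := i) (j := i) (k := j)]; exact S.mul_mem (hb i i) (hc i j)

theorem matrix_entrySubring (S : Subring (Matrix n n R)) (hS : ∀ i j, single i j (1 : R) ∈ S) :
    (S.entrySubring hS).matrix = S := by
  ext X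
  constructor
  · intro hX
    rw [matrix_eq_sum_single X]
    exact sum_mem fun i _ => sum_mem fun j _ => hX i j i j
  · intro hX i j k l
    simpa only [single_mul_mul_single, one_mul, mul_one] using
      S.mul_mem (S.mul_mem (hS k i) hX) (hS j l)

theorem exists_matrix_eq_of_matrix_le {A : Subring R} {S : Subring (Matrix n n R)}
    (h : A.matrix ≤ S) : ∃ C, A ≤ C ∧ C.matrix = S := by
  have hS : ∀ i j, single i j (1 : R) ∈ S := fun i j => h (single_mem_matrix_iff.2 A.one_mem)
  exact ⟨S.entrySubring hS, fun a ha i j => h (single_mem_matrix_iff.2 ha),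
    matrix_entrySubring S hS⟩

theorem isCoatom_matrix [Nonempty n] {A : Subring R} (hA : IsCoatom A) :
    IsCoatom (A.matrix (n := n)) := by
  refine ⟨fun h => hA.1 (matrix_injective (h.trans matrix_top.symm)), fun S hS => ?_⟩
  obtain ⟨C, hAC, rfl⟩ := exists_matrix_eq_of_matrix_le hS.le
  have hC : C = ⊤ := hA.2 C (hAC.lt_of_ne (by rintro rfl; exact hS.ne rfl))
  rw [hC, matrix_top]

end Subring

theorem matrixSubring_eq_matrix {B : Type*} [Ring B] (A : Subring B) (n : ℕ) :
    matrixSubring A n = A.matrix :=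
  rfl

/-- If `A` is a maximal subring of `B`, then `Mₙ(A)` is a maximal subring of `Mₙ(B)`. -/
theorem stmt6 {B : Type*} [Ring B] (A : Subring B) (hA : IsCoatom A) (n : ℕ) (hn : 1 ≤ n) :
    IsCoatom (matrixSubring A n) := by
  have : Nonempty (Fin n) := ⟨⟨0, hn⟩⟩
  rw [matrixSubring_eq_matrix]
  exact Subring.isCoatom_matrix hA
end

section
/- Let F ⊆ L be a minimal field extension (no intermediate fields) and let D be a finite-dimensional central division F-algebra. Then D = F ⊗_F D is a maximal F-subalgebra of L ⊗_F D: any F-subalgebra of L ⊗_F D properly containing 1 ⊗ D equals L ⊗_F D. -/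
/-!
A minimal extension `L / F` is algebraic (for transcendental `x`, `F⟮x²⟯` would be a proper
intermediate field), so every `F`-subalgebra of `L` is `⊥` or `⊤`. A finite-dimensional central
division algebra `D` is Azumaya: `D ⊗ Dᵐᵒᵖ → End_F D` is injective by the Artin–Whaples argument,
hence bijective by counting dimensions. Consequently a subalgebra `S ⊇ 1 ⊗ D` of `L ⊗ D` is closed
under the coordinate projections onto `L ⊗ 1` given by a basis of `D`, so it is generated by
`1 ⊗ D` and `V ⊗ 1`, where `V = {l | l ⊗ 1 ∈ S}`. Then `V = F` forces `S = 1 ⊗ D` and `V = L`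
gives `S = L ⊗ D`.
-/

open Polynomial IntermediateField TensorProduct Algebra.TensorProduct

theorem Transcendental.notMem_adjoin_sq {F L : Type*} [Field F] [Field L] [Algebra F L] {x : L}
    (hx : Transcendental F x) : x ∉ F⟮x ^ 2⟯ := by
  rw [mem_adjoin_simple_iff]
  rintro ⟨r, s, hrs⟩
  have hs : Polynomial.aeval (x ^ 2) s ≠ 0 := by
    intro h
    rw [h, div_zero] at hrs
    exact hx (hrs ▸ _root_.isAlgebraic_zero)
  -- `x * s(x²) = r(x²)` is an odd polynomial equal to an even one
  have hpoly : X * expand F 2 s = expand F 2 r := by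
    rw [← sub_eq_zero]
    refine transcendental_iff.mp hx _ ?_
    rw [map_sub, map_mul, aeval_X, expand_aeval, expand_aeval, ← (eq_div_iff hs).mp hrs, sub_self]
  have hs0 : s ≠ 0 := by rintro rfl; simp at hs
  have := congrArg natDegree hpoly
  rw [natDegree_X_mul ((expand_ne_zero two_pos).mpr hs0), natDegree_expand,
    natDegree_expand] at this
  omega

theorem Algebra.IsAlgebraic.of_forall_intermediateField_eq_bot_or_eq_top {F L : Type*} [Field F]
    [Field L] [Algebra F L] (hmin : ∀ K : IntermediateField F L, K = ⊥ ∨ K = ⊤) :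
    Algebra.IsAlgebraic F L := by
  refine ⟨fun x => not_not.mp fun (hx : Transcendental F x) => ?_⟩
  rcases hmin F⟮x ^ 2⟯ with h | h
  · obtain ⟨c, hc⟩ := mem_bot.mp (h ▸ mem_adjoin_simple_self F (x ^ 2))
    exact Transcendental.pow hx two_pos (hc ▸ isAlgebraic_algebraMap c)
  · exact hx.notMem_adjoin_sq (h ▸ mem_top)

theorem Subalgebra.eq_bot_or_eq_top_of_forall_intermediateField_eq_bot_or_eq_top {F L : Type*}
    [Field F] [Field L] [Algebra F L] (hmin : ∀ K : IntermediateField F L, K = ⊥ ∨ K = ⊤)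
    (V : Subalgebra F L) : V = ⊥ ∨ V = ⊤ := by
  have := Algebra.IsAlgebraic.of_forall_intermediateField_eq_bot_or_eq_top hmin
  let e := subalgebraEquivIntermediateField (K := F) (L := L)
  exact (hmin (e V)).imp (fun h => e.injective (h.trans e.map_bot.symm))
    (fun h => e.injective (h.trans e.map_top.symm))

theorem sum_commutator_mul_mul_eq_zero {A ι : Type*} [Ring A] [Fintype ι] {a e : ι → A}
    (h : ∀ x, ∑ j, a j * x * e j = 0) (y x : A) : ∑ j, (a j * y - y * a j) * x * e j = 0 :=
  calc ∑ j, (a j * y - y * a j) * x * e j = ∑ j, a j * (y * x) * e j - y * ∑ j, a j * x * e j := by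
        simp only [Finset.mul_sum, ← Finset.sum_sub_distrib, sub_mul, mul_assoc]
    _ = 0 := by rw [h, h, mul_zero, sub_zero]

theorem LinearIndependent.eq_zero_of_forall_sum_mul_mul_eq_zero {F D : Type*} [Field F]
    [DivisionRing D] [Algebra F D] [Algebra.IsCentral F D] :
    ∀ {n : ℕ} {e a : Fin n → D}, LinearIndependent F e → (∀ x, ∑ j, a j * x * e j = 0) → a = 0 := by
  intro n
  induction n with
  | zero => exact fun _ _ => Subsingleton.elim _ _
  | succ n ih =>
    intro e a he h
    have he' := he.comp Fin.succ (Fin.succ_injective n)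
    by_cases ha0 : a 0 = 0
    · have htail : (fun j : Fin n => a j.succ) = 0 :=
        ih he' fun x => by simpa [Fin.sum_univ_succ, ha0] using h x
      exact funext fun j => Fin.cases ha0 (congrFun htail) j
    exfalso
    set a' : Fin (n + 1) → D := fun j => (a 0)⁻¹ * a j with ha'
    have ha'0 : a' 0 = 1 := inv_mul_cancel₀ ha0
    have h' : ∀ x, ∑ j, a' j * x * e j = 0 := fun x => by
      simpa [ha', Finset.mul_sum, mul_assoc] using congrArg ((a 0)⁻¹ * ·) (h x)
    -- the commutators `[a' j, y]` satisfy the same relation with one term fewer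
    have hcenter : ∀ j : Fin n, a' j.succ ∈ Subalgebra.center F D := fun j => by
      refine Subalgebra.mem_center_iff.mpr fun y => ?_
      have := ih he' (a := fun j : Fin n => a' j.succ * y - y * a' j.succ) fun x => by
        simpa [Fin.sum_univ_succ, ha'0] using sum_commutator_mul_mul_eq_zero h' y x
      exact (sub_eq_zero.mp (congrFun this j)).symm
    choose c hc using fun j => (Algebra.IsCentral.mem_center_iff F).mp (hcenter j)
    have hdep : ∑ j, (Fin.cons 1 c : Fin (n + 1) → F) j • e j = 0 := by
      simpa [Fin.sum_univ_succ, ha'0, hc, Algebra.smul_def] using h' 1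
    simpa using Fintype.linearIndependent_iff.mp he _ hdep 0

theorem IsAzumaya.of_isCentral_of_divisionRing {F D : Type*} [Field F] [DivisionRing D]
    [Algebra F D] [Algebra.IsCentral F D] [FiniteDimensional F D] : IsAzumaya F D where
  bij := by
    have hinj : Function.Injective (AlgHom.mulLeftRight F D).toLinearMap := by
      rw [injective_iff_map_eq_zero]
      intro t ht
      let b := Module.finBasis F D
      obtain ⟨c, rfl⟩ := TensorProduct.eq_repr_basis_right (b.map (MulOpposite.opLinearEquiv F)) t
      have hc : ⇑c = 0 := b.linearIndependent.eq_zero_of_forall_sum_mul_mul_eq_zero fun x => by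
        simpa [Finsupp.sum_fintype, map_sum] using LinearMap.congr_fun ht x
      simp [DFunLike.coe_injective (hc.trans Finsupp.coe_zero.symm)]
    refine ⟨hinj, (LinearMap.injective_iff_surjective_of_finrank_eq_finrank ?_).mp hinj⟩
    rw [Module.finrank_tensorProduct, Module.finrank_linearMap,
      (MulOpposite.opLinearEquiv F).finrank_eq]

section

variable {R L D : Type*} [CommSemiring R] [Semiring L] [Algebra R L] [Semiring D] [Algebra R D]

theorem lTensor_mulLeftRight_tmul (a : D) (c : Dᵐᵒᵖ) (z : L ⊗[R] D) :
    (AlgHom.mulLeftRight R D (a ⊗ₜ c)).lTensor L z = (1 ⊗ₜ a) * z * (1 ⊗ₜ c.unop) := by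
  induction z with
  | zero => simp
  | tmul l d => simp [mul_assoc]
  | add u v hu hv => rw [map_add, hu, hv, mul_add, add_mul]

theorem lTensor_mulLeftRight_mem {S : Subalgebra R (L ⊗[R] D)} (hS : includeRight.range ≤ S)
    (t : D ⊗[R] Dᵐᵒᵖ) {z : L ⊗[R] D} (hz : z ∈ S) :
    (AlgHom.mulLeftRight R D t).lTensor L z ∈ S := by
  induction t with
  | zero => simp
  | tmul a c =>
    rw [lTensor_mulLeftRight_tmul]
    exact S.mul_mem (S.mul_mem (hS ⟨a, rfl⟩) hz) (hS ⟨c.unop, rfl⟩)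
  | add u v hu hv => simpa using S.add_mem hu hv

theorem lTensor_toSpanSingleton_comp_coord {ι : Type*} [DecidableEq ι] (b : Module.Basis ι R D)
    (i : ι) (z : L ⊗[R] D) :
    ((LinearMap.toSpanSingleton R D 1).comp (b.coord i)).lTensor L z
      = equivFinsuppOfBasisRight b z i ⊗ₜ 1 := by
  induction z with
  | zero => simp
  | tmul l d => simp [TensorProduct.smul_tmul']
  | add u v hu hv => simp [hu, hv, TensorProduct.add_tmul]

-- Surjectivity of `D ⊗ Dᵐᵒᵖ → End D` makes the coordinate projection `L ⊗ D → L ⊗ 1`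
-- a sum of maps `z ↦ (1 ⊗ a) * z * (1 ⊗ c)`.
theorem tmul_one_mem_of_mem [IsAzumaya R D] {ι : Type*} [DecidableEq ι] (b : Module.Basis ι R D)
    {S : Subalgebra R (L ⊗[R] D)} (hS : includeRight.range ≤ S) {s : L ⊗[R] D} (hs : s ∈ S)
    (i : ι) : equivFinsuppOfBasisRight b s i ⊗ₜ (1 : D) ∈ S := by
  obtain ⟨t, ht⟩ := IsAzumaya.bij.2 ((LinearMap.toSpanSingleton R D 1).comp (b.coord i))
  rw [← lTensor_toSpanSingleton_comp_coord, ← ht]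
  exact lTensor_mulLeftRight_mem hS t hs

theorem Subalgebra.eq_map_comap_includeLeft_sup_range_includeRight [IsAzumaya R D]
    [Module.Free R D] {S : Subalgebra R (L ⊗[R] D)} (hS : includeRight.range ≤ S) :
    S = (S.comap includeLeft).map includeLeft ⊔ includeRight.range := by
  classical
  refine le_antisymm (fun s hs => ?_) (sup_le (Subalgebra.map_le.mpr le_rfl) hS)
  let b := Module.Free.chooseBasis R D
  rw [← (equivFinsuppOfBasisRight b).symm_apply_apply s, equivFinsuppOfBasisRight_symm_apply]
  refine Subalgebra.sum_mem _ fun i _ => show _ ⊗ₜ b i ∈ _ from ?_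
  rw [← mul_one (equivFinsuppOfBasisRight b s i), ← one_mul (b i), ← tmul_mul_tmul]
  exact Algebra.mul_mem_sup ⟨_, tmul_one_mem_of_mem b hS hs i, rfl⟩ ⟨b i, rfl⟩

end

theorem stmt7_general {F L D : Type*} [Field F] [Field L] [Algebra F L]
    (hmin : ∀ K' : IntermediateField F L, K' = ⊥ ∨ K' = ⊤)
    [DivisionRing D] [Algebra F D] [FiniteDimensional F D]
    (hcentral : ∀ d : D, (∀ x : D, d * x = x * d) → ∃ c : F, d = algebraMap F D c)
    (S : Subalgebra F (L ⊗[F] D))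
    (hS : (Algebra.TensorProduct.includeRight : D →ₐ[F] L ⊗[F] D).range < S) :
    S = ⊤ := by
  have : Algebra.IsCentral F D := ⟨fun d hd => Algebra.mem_bot.mpr <| by
    obtain ⟨c, hc⟩ := hcentral d fun x => (Subalgebra.mem_center_iff.mp hd x).symm
    exact ⟨c, hc.symm⟩⟩
  have := IsAzumaya.of_isCentral_of_divisionRing (F := F) (D := D)
  have hSeq := Subalgebra.eq_map_comap_includeLeft_sup_range_includeRight hS.le
  rcases Subalgebra.eq_bot_or_eq_top_of_forall_intermediateField_eq_bot_or_eq_top hmin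
    (S.comap includeLeft) with hV | hV
  · rw [hV, Algebra.map_bot, bot_sup_eq] at hSeq
    exact absurd hSeq hS.ne'
  · rwa [hV, Algebra.map_top, ← AlgHom.comp_id includeLeft, ← AlgHom.comp_id includeRight,
      ← Algebra.TensorProduct.map_range, Algebra.TensorProduct.map_id, Algebra.range_id] at hSeq

/-- If `F ⊆ L` is a minimal field extension and `D` a finite-dimensional central division
`F`-algebra, then `1 ⊗ D` is a maximal `F`-subalgebra of `L ⊗[F] D`. -/
theorem stmt7 {F L D : Type*} [Field F] [Field L] [Algebra F L]
    (hmin : ∀ K' : IntermediateField F L, K' = ⊥ ∨ K' = ⊤)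
    (hne : (⊥ : IntermediateField F L) ≠ ⊤)
    [DivisionRing D] [Algebra F D] [FiniteDimensional F D]
    (hcentral : ∀ d : D, (∀ x : D, d * x = x * d) → ∃ c : F, d = algebraMap F D c)
    (S : Subalgebra F (L ⊗[F] D))
    (hS : (Algebra.TensorProduct.includeRight : D →ₐ[F] L ⊗[F] D).range < S) :
    S = ⊤ :=
  stmt7_general hmin hcentral S hS
end

section
/- Let D be a division ring containing a field K in its center. The diagonal subalgebra Δ²(n,D) = {(X,X) : X ∈ M_n(D)} is a maximal K-subalgebra of M_n(D) × M_n(D). -/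
/-!
A subalgebra `S` of `A × A` containing the diagonal is a module over it, so the elements `x`
with `(x, 0) ∈ S` form a two-sided ideal of `A`. If `S` also contains some `(a, b)` with `a ≠ b`,
then `a - b ≠ 0` lies in this ideal, so for simple `A` it contains `1`. Once `(1, 0) ∈ S`, every
`(x, y) = (x, x) (1, 0) + (y, y) (1 - (1, 0))` lies in `S`. Matrix rings over division rings are
simple.
-/

namespace AlgHom

variable {R A : Type*} [CommSemiring R] [Semiring A] [Algebra R A]

theorem mem_range_prod_id_id {p : A × A} :
    p ∈ ((AlgHom.id R A).prod (AlgHom.id R A)).range ↔ p.1 = p.2 := by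
  constructor
  · rintro ⟨x, rfl⟩
    rfl
  · intro h
    exact ⟨p.1, Prod.ext rfl h⟩

end AlgHom

namespace Subalgebra

variable {R A : Type*} [CommRing R] [Ring A] [Algebra R A]
  (S : Subalgebra R (A × A))

def fstIdeal (hS : ∀ x : A, (x, x) ∈ S) : TwoSidedIdeal A :=
  TwoSidedIdeal.mk' {x | (x, 0) ∈ S} S.zero_mem
    (fun hx hy => by simpa using S.add_mem hx hy)
    (fun hx => by simpa using S.neg_mem hx)
    (fun {x _} hy => by simpa using S.mul_mem (hS x) hy)
    (fun {_ y} hx => by simpa using S.mul_mem hx (hS y))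

theorem mem_fstIdeal (hS : ∀ x : A, (x, x) ∈ S) {x : A} : x ∈ S.fstIdeal hS ↔ (x, 0) ∈ S :=
  TwoSidedIdeal.mem_mk' _ _ _ _ _ _ x

theorem one_zero_mem [IsSimpleRing A] (hS : ∀ x : A, (x, x) ∈ S) {a b : A} (hab : a ≠ b)
    (h : (a, b) ∈ S) : ((1, 0) : A × A) ∈ S := by
  have hsub : a - b ∈ S.fstIdeal hS := by
    rw [mem_fstIdeal]
    simpa using S.sub_mem h (hS b)
  rw [← mem_fstIdeal S hS]
  exact IsSimpleRing.one_mem_of_ne_zero_mem _ (sub_ne_zero.2 hab) hsub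

theorem eq_top_of_one_zero_mem (hS : ∀ x : A, (x, x) ∈ S) (h : ((1, 0) : A × A) ∈ S) :
    S = ⊤ := by
  refine eq_top_iff.2 fun ⟨x, y⟩ _ => ?_
  have h01 : ((0, 1) : A × A) ∈ S := by
    convert S.sub_mem S.one_mem h using 1
    ext <;> simp
  simpa using S.add_mem (S.mul_mem (hS x) h) (S.mul_mem (hS y) h01)

end Subalgebra

theorem AlgHom.isCoatom_range_prod_id_id {R A : Type*} [CommRing R] [Ring A] [Algebra R A]
    [IsSimpleRing A] : IsCoatom ((AlgHom.id R A).prod (AlgHom.id R A)).range := by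
  constructor
  · intro h
    have h10 : ((1, 0) : A × A) ∈ ((AlgHom.id R A).prod (AlgHom.id R A)).range := h ▸ trivial
    exact one_ne_zero (mem_range_prod_id_id.1 h10)
  · intro S hS
    obtain ⟨⟨a, b⟩, habS, hab⟩ := SetLike.exists_of_lt hS
    have hdiag (x : A) : (x, x) ∈ S := hS.le (mem_range_prod_id_id.2 rfl)
    exact S.eq_top_of_one_zero_mem hdiag <|
      S.one_zero_mem hdiag (fun h => hab (mem_range_prod_id_id.2 h)) habS

/-- For a division ring `D` with a field `K` in its center, the diagonal subalgebra
`Δ²(n,D) = {(X,X)}` is a maximal `K`-subalgebra of `Mₙ(D) × Mₙ(D)`. -/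
theorem stmt8 {K D : Type*} [Field K] [DivisionRing D] [Algebra K D] (n : ℕ) (hn : 0 < n) :
    IsCoatom ((AlgHom.prod (AlgHom.id K (Matrix (Fin n) (Fin n) D))
        (AlgHom.id K (Matrix (Fin n) (Fin n) D))).range) := by
  have : Nonempty (Fin n) := ⟨⟨0, hn⟩⟩
  exact AlgHom.isCoatom_range_prod_id_id
end

section
/- Let B and C be K-algebras and A a maximal subalgebra of B × C. If the restriction to A of the projection π_B : B × C → B is not surjective, then π_C restricted to A is surjective, π_B(A) is a maximal subalgebra of B, and A = π_B(A) × C. -/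
/-- If `A` is a maximal subalgebra of `B × C` and the projection to `B` restricted to `A`
is not surjective, then the projection to `C` restricted to `A` is surjective, `π_B(A)` is
a maximal subalgebra of `B`, and `A = π_B(A) × C`. -/
theorem stmt9 {K B C : Type*} [Field K] [Ring B] [Ring C] [Algebra K B] [Algebra K C]
    (A : Subalgebra K (B × C)) (hmax : IsCoatom A)
    (hns : ¬ Function.Surjective (fun a : A => (a : B × C).1)) :
    Function.Surjective (fun a : A => (a : B × C).2)
    ∧ IsCoatom (A.map (AlgHom.fst K B C))
    ∧ A = (A.map (AlgHom.fst K B C)).prod ⊤ := by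
  set A₁ := A.map (AlgHom.fst K B C) with hA₁
  have hle : A ≤ A₁.prod ⊤ := by
    intro x hx
    rw [Subalgebra.mem_prod]
    exact ⟨⟨x, hx, rfl⟩, trivial⟩
  have hne : A₁ ≠ ⊤ := by
    intro h
    apply hns
    intro b
    have hb : b ∈ A₁ := h ▸ Algebra.mem_top
    obtain ⟨a, ha, rfl⟩ := hb
    exact ⟨⟨a, ha⟩, rfl⟩
  have heq : A = A₁.prod ⊤ := by
    rcases hle.lt_or_eq with hlt | h
    · exfalso
      have htop := hmax.2 _ hlt
      apply hne
      ext b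
      simp only [Algebra.mem_top, iff_true]
      have : ((b, (0:C)) : B × C) ∈ A₁.prod ⊤ := htop ▸ Algebra.mem_top
      exact ((Subalgebra.mem_prod).mp this).1
    · exact h
  refine ⟨?_, ⟨hne, ?_⟩, heq⟩
  · intro c
    have : ((0:B), c) ∈ A := by
      rw [heq, Subalgebra.mem_prod]
      exact ⟨A₁.zero_mem, trivial⟩
    exact ⟨⟨_, this⟩, rfl⟩
  · intro D hlt
    obtain ⟨b, hbD, hbA⟩ := SetLike.exists_of_lt hlt
    have hlt2 : A < D.prod ⊤ := by
      rw [heq]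
      refine lt_of_le_of_ne (fun x hx => ?_) (fun h => ?_)
      · rw [Subalgebra.mem_prod] at hx ⊢
        exact ⟨hlt.le hx.1, trivial⟩
      · apply hbA
        have : ((b, (0:C)) : B × C) ∈ A₁.prod ⊤ := by
          rw [h, Subalgebra.mem_prod]; exact ⟨hbD, trivial⟩
        exact ((Subalgebra.mem_prod).mp this).1
    have htop := hmax.2 _ hlt2
    ext x
    simp only [Algebra.mem_top, iff_true]
    have : ((x, (0:C)) : B × C) ∈ D.prod ⊤ := htop ▸ Algebra.mem_top
    exact ((Subalgebra.mem_prod).mp this).1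
end

section
/- Let D be a division ring, K a field in the center of D, and A ⊂ M_n(D) × M_n(D) a maximal K-subalgebra such that both projections restricted to A are surjective. Then there exists a K-algebra automorphism α of M_n(D) such that A = {(X, α(X)) : X ∈ M_n(D)}. -/
/-!
The kernel of the first projection `A → Mₙ(D)` is carried by the second projection, which is
surjective, onto a two-sided ideal of the simple ring `Mₙ(D)`. If that ideal were everything,
`A` would contain `(0, 1)`, hence also `(1, 0)`, and then `A` would be the whole product since
both projections are onto; maximality excludes this. So the ideal is zero, the first projection
is injective, and symmetrically so is the second. Both are then `K`-algebra isomorphisms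
`A ≃ Mₙ(D)`, and `A` is the graph of `α = π₂ ∘ π₁⁻¹`.
-/

namespace TwoSidedIdeal

variable {A S : Type*} [Ring A] [Ring S]

def mapOfSurjective (I : TwoSidedIdeal A) (g : A →+* S) (hg : Function.Surjective g) :
    TwoSidedIdeal S :=
  .mk' (g '' I) ⟨0, I.zero_mem, map_zero g⟩
    (by rintro _ _ ⟨a, ha, rfl⟩ ⟨b, hb, rfl⟩; exact ⟨a + b, I.add_mem ha hb, map_add g a b⟩)
    (by rintro _ ⟨a, ha, rfl⟩; exact ⟨-a, I.neg_mem ha, map_neg g a⟩)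
    (by
      rintro x _ ⟨a, ha, rfl⟩
      obtain ⟨b, rfl⟩ := hg x
      exact ⟨b * a, I.mul_mem_left b a ha, map_mul g b a⟩)
    (by
      rintro _ y ⟨a, ha, rfl⟩
      obtain ⟨b, rfl⟩ := hg y
      exact ⟨a * b, I.mul_mem_right a b ha, map_mul g a b⟩)

@[simp]
theorem mem_mapOfSurjective {I : TwoSidedIdeal A} {g : A →+* S} {hg : Function.Surjective g}
    {y : S} : y ∈ I.mapOfSurjective g hg ↔ y ∈ g '' I :=
  mem_mk' ..

end TwoSidedIdeal

section

variable {A R S : Type*} [Ring A] [Ring R] [Ring S]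

theorem RingHom.injective_of_isSimpleRing [IsSimpleRing S] (f : A →+* R) (g : A →+* S)
    (hg : Function.Surjective g) (hfg : ∀ a, f a = 0 → g a = 0 → a = 0)
    (hno : ¬ ∃ e, f e = 0 ∧ g e = 1) : Function.Injective f := by
  set I := (TwoSidedIdeal.ker f).mapOfSurjective g hg
  have hbot : I = ⊥ := by
    refine (IsSimpleRing.simple.eq_bot_or_eq_top I).resolve_right fun htop => hno ?_
    obtain ⟨e, he, he1⟩ := TwoSidedIdeal.mem_mapOfSurjective.1 (htop ▸ trivial : (1 : S) ∈ I)
    exact ⟨e, (TwoSidedIdeal.mem_ker f).1 he, he1⟩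
  refine (injective_iff_map_eq_zero f).2 fun a ha => hfg a ha ?_
  have : g a ∈ I := TwoSidedIdeal.mem_mapOfSurjective.2 ⟨a, (TwoSidedIdeal.mem_ker f).2 ha, rfl⟩
  rwa [hbot] at this

namespace Subalgebra

variable {K : Type*} [CommRing K] [Algebra K R] [Algebra K S] (A : Subalgebra K (R × S))

theorem eq_top_of_one_zero_mem_s10
    (h1 : Function.Surjective ((AlgHom.fst K R S).comp A.val))
    (h2 : Function.Surjective ((AlgHom.snd K R S).comp A.val))
    (h : ((1 : R), (0 : S)) ∈ A) : A = ⊤ := by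
  refine eq_top_iff.2 fun x _ => ?_
  obtain ⟨a, ha⟩ := h1 x.1
  obtain ⟨b, hb⟩ := h2 x.2
  convert A.add_mem (A.mul_mem h a.2) (A.mul_mem (A.sub_mem A.one_mem h) b.2) using 1
  ext <;> simp [← ha, ← hb]

theorem eq_top_of_zero_one_mem
    (h1 : Function.Surjective ((AlgHom.fst K R S).comp A.val))
    (h2 : Function.Surjective ((AlgHom.snd K R S).comp A.val))
    (h : ((0 : R), (1 : S)) ∈ A) : A = ⊤ := by
  refine A.eq_top_of_one_zero_mem_s10 h1 h2 ?_
  convert A.sub_mem A.one_mem h using 1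
  ext <;> simp

theorem injective_fst_of_ne_top [IsSimpleRing S] (hA : A ≠ ⊤)
    (h1 : Function.Surjective ((AlgHom.fst K R S).comp A.val))
    (h2 : Function.Surjective ((AlgHom.snd K R S).comp A.val)) :
    Function.Injective ((AlgHom.fst K R S).comp A.val) := by
  refine RingHom.injective_of_isSimpleRing ((AlgHom.fst K R S).comp A.val : A →+* R)
    ((AlgHom.snd K R S).comp A.val : A →+* S) h2
    (fun a h1a h2a => Subtype.ext (Prod.ext h1a h2a)) ?_
  rintro ⟨e, h1e, h2e⟩
  refine hA (A.eq_top_of_zero_one_mem h1 h2 ?_)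
  convert e.2
  exacts [h1e.symm, h2e.symm]

theorem injective_snd_of_ne_top [IsSimpleRing R] (hA : A ≠ ⊤)
    (h1 : Function.Surjective ((AlgHom.fst K R S).comp A.val))
    (h2 : Function.Surjective ((AlgHom.snd K R S).comp A.val)) :
    Function.Injective ((AlgHom.snd K R S).comp A.val) := by
  refine RingHom.injective_of_isSimpleRing ((AlgHom.snd K R S).comp A.val : A →+* S)
    ((AlgHom.fst K R S).comp A.val : A →+* R) h1
    (fun a h2a h1a => Subtype.ext (Prod.ext h1a h2a)) ?_
  rintro ⟨e, h2e, h1e⟩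
  refine hA (A.eq_top_of_one_zero_mem_s10 h1 h2 ?_)
  convert e.2
  exacts [h1e.symm, h2e.symm]

theorem exists_algEquiv_mem_iff_of_bijective
    (h1 : Function.Bijective ((AlgHom.fst K R S).comp A.val))
    (h2 : Function.Bijective ((AlgHom.snd K R S).comp A.val)) :
    ∃ α : R ≃ₐ[K] S, ∀ x, x ∈ A ↔ ∃ X : R, x = (X, α X) := by
  set e₁ := AlgEquiv.ofBijective _ h1
  set e₂ := AlgEquiv.ofBijective _ h2
  refine ⟨e₁.symm.trans e₂, fun x => ⟨fun hx => ⟨x.1, ?_⟩, ?_⟩⟩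
  · have : e₁.symm x.1 = ⟨x, hx⟩ := e₁.symm_apply_eq.2 rfl
    rw [AlgEquiv.trans_apply, this]
    rfl
  · rintro ⟨X, rfl⟩
    have hX : ((e₁.symm X : A) : R × S) = (X, e₁.symm.trans e₂ X) :=
      Prod.ext (e₁.apply_symm_apply X) rfl
    exact hX ▸ (e₁.symm X).2

end Subalgebra

end

/-- A maximal `K`-subalgebra of `Mₙ(D) × Mₙ(D)` projecting surjectively onto both factors
is the twisted diagonal `{(X, α X)}` for some `K`-algebra automorphism `α` of `Mₙ(D)`. -/
theorem stmt10 {K D : Type*} [Field K] [DivisionRing D] [Algebra K D] (n : ℕ)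
    (A : Subalgebra K (Matrix (Fin n) (Fin n) D × Matrix (Fin n) (Fin n) D))
    (hmax : IsCoatom A)
    (h1 : Function.Surjective fun a : A => (a : Matrix (Fin n) (Fin n) D × Matrix (Fin n) (Fin n) D).1)
    (h2 : Function.Surjective fun a : A => (a : Matrix (Fin n) (Fin n) D × Matrix (Fin n) (Fin n) D).2) :
    ∃ α : Matrix (Fin n) (Fin n) D ≃ₐ[K] Matrix (Fin n) (Fin n) D,
      ∀ x, x ∈ A ↔ ∃ X : Matrix (Fin n) (Fin n) D, x = (X, α X) := by
  obtain ⟨hA, -⟩ := hmax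
  have : Nonempty (Fin n) := by
    refine Fin.pos_iff_nonempty.1 (Nat.pos_of_ne_zero fun hn => hA ?_)
    subst hn
    exact Subsingleton.elim _ _
  exact A.exists_algEquiv_mem_iff_of_bijective ⟨A.injective_fst_of_ne_top hA h1 h2, h1⟩
    ⟨A.injective_snd_of_ne_top hA h1 h2, h2⟩
end

section
/- Let B be a finite-dimensional K-algebra with a subalgebra A₀ such that B = A₀ ⊕ J(B) as K-vector spaces, and let H ⊆ J(B) be a two-sided ideal of B that is maximal among B-sub-bimodules properly contained in J(B). Then A = A₀ ⊕ H is a maximal subalgebra of B. -/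
/-!
Write `J` for the Jacobson radical of `B`. Since `B` is Artinian, `J` is nilpotent, so
`J ≤ H ⊔ J²` would give `J ≤ H ⊔ Jⁿ = H`; hence the two-sided ideal `H ⊔ J²` lies strictly
below `J` and maximality of `H` yields `J² ≤ H`.
If `C ⊇ A₀ + H` is a subalgebra, the modular law gives `C = A₀ ⊕ (C ∩ J)`, and `C ∩ J` is a
`B`-bimodule because `B = A₀ + J` and `J (C ∩ J) ⊆ J² ⊆ C`. So `C ∩ J` is `H` or `J`, i.e.
`C = A₀ + H` or `C = B`; and `A₀ + H ≠ B` because `(A₀ + H) ∩ J = H ≠ J`.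
-/

namespace Ideal

variable {R : Type*} [Semiring R]

instance {I J : Ideal R} [I.IsTwoSided] [J.IsTwoSided] : (I ⊔ J).IsTwoSided where
  mul_mem_of_left b h := by
    obtain ⟨x, hx, y, hy, rfl⟩ := Submodule.mem_sup.mp h
    rw [add_mul]
    exact add_mem (mem_sup_left (mul_mem_right b I hx)) (mem_sup_right (mul_mem_right b J hy))

theorem le_of_le_sup_mul_self {I N : Ideal R} (hN : IsNilpotent N) (h : N ≤ I ⊔ N * N) :
    N ≤ I := by
  have hpow : ∀ k : ℕ, N ≤ I ⊔ N ^ (k + 1) := by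
    intro k
    induction k with
    | zero => rw [zero_add, Submodule.pow_one]; exact le_sup_right
    | succ k ih =>
      calc N ≤ I ⊔ N * N := h
        _ ≤ I ⊔ N * (I ⊔ N ^ (k + 1)) := sup_le_sup_left (mul_mono_right ih) _
        _ = I ⊔ N * I ⊔ N ^ (k + 1 + 1) := by
          rw [mul_sup, ← Submodule.pow_succ' N k.succ_ne_zero, sup_assoc]
        _ = I ⊔ N ^ (k + 1 + 1) := by rw [sup_mul_left_self]
  obtain ⟨n, hn⟩ := hN
  calc N ≤ I ⊔ N ^ (n + 1) := hpow n
    _ ≤ I := sup_le le_rfl ((pow_le_pow_right n.le_succ).trans (hn.le.trans bot_le))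

theorem mul_self_le_of_maximal {H N : Ideal R} [H.IsTwoSided] [N.IsTwoSided]
    (hN : IsNilpotent N) (hHN : H < N)
    (hmax : ∀ I : Ideal R, I.IsTwoSided → H ≤ I → I < N → I = H) : N * N ≤ H := by
  rcases (sup_le hHN.le mul_le_left : H ⊔ N * N ≤ N).lt_or_eq with hlt | heq
  · exact le_sup_right.trans (hmax _ inferInstance le_sup_left hlt).le
  · exact absurd (le_of_le_sup_mul_self hN heq.ge) hHN.not_ge

end Ideal

namespace Subalgebra

variable {K B : Type*} [CommRing K] [Ring B] [Algebra K B]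
  {A₀ : Subalgebra K B} {H J : Ideal B}

variable (A₀ H) in
def supIdeal [H.IsTwoSided] : Subalgebra K B :=
  (toSubmodule A₀ ⊔ H.restrictScalars K).toSubalgebra (Submodule.mem_sup_left A₀.one_mem) (by
    intro x y hx hy
    obtain ⟨a, ha, h, hh, rfl⟩ := Submodule.mem_sup.mp hx
    obtain ⟨a', ha', h', hh', rfl⟩ := Submodule.mem_sup.mp hy
    rw [add_mul, mul_add, add_assoc]
    exact Submodule.add_mem_sup (A₀.mul_mem ha ha')
      (add_mem (H.mul_mem_left a hh') (H.mul_mem_right _ hh)))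

theorem toSubmodule_supIdeal [H.IsTwoSided] :
    toSubmodule (A₀.supIdeal H) = toSubmodule A₀ ⊔ H.restrictScalars K :=
  Submodule.toSubalgebra_toSubmodule _ _ _

theorem supIdeal_ne_top [H.IsTwoSided] (hdisj : Disjoint (toSubmodule A₀) (J.restrictScalars K))
    (hHJ : H < J) : A₀.supIdeal H ≠ ⊤ := by
  intro htop
  have hinf : (toSubmodule A₀ ⊔ H.restrictScalars K) ⊓ J.restrictScalars K =
      H.restrictScalars K := by
    rw [sup_comm, sup_inf_assoc_of_le _ ((Submodule.restrictScalars_le K).mpr hHJ.le),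
      hdisj.eq_bot, sup_bot_eq]
  rw [← toSubmodule_supIdeal, Algebra.toSubmodule_eq_top.mpr htop, top_inf_eq] at hinf
  exact hHJ.ne' (Submodule.restrictScalars_injective K B B hinf)

theorem exists_ideal_restrictScalars_eq_inf [J.IsTwoSided]
    (hcodisj : Codisjoint (toSubmodule A₀) (J.restrictScalars K)) {C : Subalgebra K B}
    (hA₀C : A₀ ≤ C) (hJJC : (J * J).restrictScalars K ≤ toSubmodule C) :
    ∃ I : Ideal B, I.IsTwoSided ∧ I.restrictScalars K = toSubmodule C ⊓ J.restrictScalars K := by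
  have hmul : ∀ x ∈ toSubmodule C ⊓ J.restrictScalars K, ∀ b : B,
      b * x ∈ toSubmodule C ⊓ J.restrictScalars K ∧
        x * b ∈ toSubmodule C ⊓ J.restrictScalars K := by
    rintro x ⟨hxC, hxJ⟩ b
    obtain ⟨a, ha, j, hj, rfl⟩ :=
      Submodule.mem_sup.mp (hcodisj.eq_top ▸ Submodule.mem_top (x := b))
    rw [add_mul, mul_add]
    exact ⟨⟨add_mem (C.mul_mem (hA₀C ha) hxC) (hJJC (Ideal.mul_mem_mul hj hxJ)),
        add_mem (J.mul_mem_left a hxJ) (J.mul_mem_left j hxJ)⟩,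
      ⟨add_mem (C.mul_mem hxC (hA₀C ha)) (hJJC (Ideal.mul_mem_mul hxJ hj)),
        add_mem (J.mul_mem_right a hxJ) (J.mul_mem_right j hxJ)⟩⟩
  exact ⟨{ toAddSubmonoid := (toSubmodule C ⊓ J.restrictScalars K).toAddSubmonoid
           smul_mem' := fun b x hx => (hmul x hx b).1 },
    ⟨fun b hx => (hmul _ hx b).2⟩, rfl⟩

theorem isCoatom_supIdeal [H.IsTwoSided] [J.IsTwoSided]
    (hcompl : IsCompl (toSubmodule A₀) (J.restrictScalars K)) (hHJ : H < J) (hJJ : J * J ≤ H)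
    (hmax : ∀ I : Ideal B, I.IsTwoSided → H ≤ I → I < J → I = H) :
    IsCoatom (A₀.supIdeal H) := by
  refine ⟨supIdeal_ne_top hcompl.disjoint hHJ, fun C hAC => ?_⟩
  have hle : toSubmodule A₀ ⊔ H.restrictScalars K ≤ toSubmodule C := by
    rw [← toSubmodule_supIdeal]; exact hAC.le
  obtain ⟨I, hI, hIC⟩ := exists_ideal_restrictScalars_eq_inf hcompl.codisjoint
    (toSubmodule.le_iff_le.mp (le_sup_left.trans hle))
    (((Submodule.restrictScalars_le K).mpr hJJ).trans (le_sup_right.trans hle))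
  have hC : toSubmodule C = toSubmodule A₀ ⊔ I.restrictScalars K := by
    rw [hIC, inf_comm, ← sup_inf_assoc_of_le _ (le_sup_left.trans hle), hcompl.codisjoint.eq_top,
      top_inf_eq]
  have hHI : H ≤ I := (Submodule.restrictScalars_le K).mp <|
    hIC ▸ le_inf (le_sup_right.trans hle) ((Submodule.restrictScalars_le K).mpr hHJ.le)
  rcases (show I ≤ J from fun x hx => (hIC.le hx).2).lt_or_eq with hlt | rfl
  · obtain rfl := hmax I hI hHI hlt
    exact absurd (toSubmodule_injective (hC.trans toSubmodule_supIdeal.symm)) hAC.ne'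
  · rw [← Algebra.toSubmodule_eq_top, hC, hcompl.codisjoint.eq_top]

end Subalgebra

/-- If `B = A₀ ⊕ J(B)` as `K`-vector spaces for a subalgebra `A₀`, and `H` is a two-sided
ideal of `B` maximal among `B`-sub-bimodules properly contained in `J(B)`, then
`A₀ ⊕ H` is a maximal subalgebra of `B`. -/
theorem stmt11 {K B : Type*} [Field K] [Ring B] [Algebra K B] [FiniteDimensional K B]
    (A₀ : Subalgebra K B)
    (hcompl : IsCompl (Subalgebra.toSubmodule A₀)
      (Submodule.restrictScalars K (Ideal.jacobson (⊥ : Ideal B))))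
    (H : Ideal B) (hHr : ∀ x ∈ H, ∀ b : B, x * b ∈ H)
    (hHJ : H < Ideal.jacobson (⊥ : Ideal B))
    (hmaxH : ∀ H' : Ideal B, (∀ x ∈ H', ∀ b : B, x * b ∈ H') →
      H ≤ H' → H' < Ideal.jacobson (⊥ : Ideal B) → H' = H) :
    ∃ A : Subalgebra K B,
      Subalgebra.toSubmodule A = Subalgebra.toSubmodule A₀ ⊔ Submodule.restrictScalars K H
      ∧ IsCoatom A := by
  have : H.IsTwoSided := ⟨fun b hx => hHr _ hx b⟩
  have : IsArtinianRing B := .of_finite K B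
  have hmax : ∀ I : Ideal B, I.IsTwoSided → H ≤ I → I < Ideal.jacobson ⊥ → I = H :=
    fun I hI => hmaxH I fun x hx b => I.mul_mem_right b hx
  exact ⟨A₀.supIdeal H, Subalgebra.toSubmodule_supIdeal, Subalgebra.isCoatom_supIdeal hcompl hHJ
    (Ideal.mul_self_le_of_maximal IsArtinianRing.isNilpotent_jacobson_bot hHJ hmax) hmax⟩
end

section
/- Let B be a finite-dimensional K-algebra, A a maximal subalgebra of B with J(B) ⊄ A. Then J(A) = A ∩ J(B) is a two-sided ideal of B, J(B)² ⊆ J(A), and J(B)/J(A) is a simple B-bimodule. -/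
/-!
`A + J` is a subalgebra for every two-sided ideal `J` of `B`, so by maximality `A + J = B` as
soon as `J ⊄ A`. Applied to the powers of the nilpotent radical `J = J(B)`: if `m ≥ 1` is such that
`J^(m+1) ⊆ A` but `J^m ⊄ A`, then `J = (A ∩ J) + J^m`, and expanding a product of two such sums
puts `J²` inside `A + J^(m+1) ⊆ A`. The decomposition `B = A + J` together with `J² ⊆ A` makes
`A ∩ J` an ideal of `B`, and makes every ideal `A ∩ J ⊆ H ⊆ J` with `H ⊄ A` equal to `J`.
Finally `1 + y a` is invertible in `A` for `a ∈ A ∩ J` since `y a` is nilpotent, while for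
`a ∈ J(A)` a left inverse of `1 + y a` in `B` is built from one of `1 + c a` in `A`, where
`y = c + j` with `c ∈ A`, `j ∈ J`.
-/

theorem Ideal.isNilpotent_of_mem_of_isNilpotent {B : Type*} [Ring B] {I : Ideal B}
    (hI : IsNilpotent I) {x : B} (hx : x ∈ I) : IsNilpotent x := by
  obtain ⟨n, hn⟩ := hI
  refine ⟨n, ?_⟩
  have hxn := Ideal.pow_mem_pow hx n
  rwa [hn, Submodule.zero_eq_bot, Submodule.mem_bot] at hxn

namespace Subalgebra

open Ideal

variable {R B : Type*} [CommRing R] [Ring B] [Algebra R B] {A : Subalgebra R B}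

theorem toSubmodule_sup_eq_top_of_isCoatom (hA : IsCoatom A) (I : Ideal B) [I.IsTwoSided]
    (hI : ¬ ∀ x ∈ I, x ∈ A) : toSubmodule A ⊔ I.restrictScalars R = ⊤ := by
  set W := toSubmodule A ⊔ I.restrictScalars R
  have one_mem : (1 : B) ∈ W := Submodule.mem_sup_left A.one_mem
  have mul_mem : ∀ p q, p ∈ W → q ∈ W → p * q ∈ W := by
    intro p q hp hq
    obtain ⟨a, ha, u, hu, rfl⟩ := Submodule.mem_sup.mp hp
    obtain ⟨a', ha', u', hu', rfl⟩ := Submodule.mem_sup.mp hq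
    rw [show (a + u) * (a' + u') = a * a' + (a * u' + u * (a' + u')) by noncomm_ring]
    exact add_mem (Submodule.mem_sup_left (A.mul_mem ha ha'))
      (Submodule.mem_sup_right (add_mem (I.mul_mem_left a hu') (I.mul_mem_right _ hu)))
  obtain ⟨x, hxI, hxA⟩ : ∃ x ∈ I, x ∉ A := by simpa using hI
  have hAW : A < W.toSubalgebra one_mem mul_mem := SetLike.lt_iff_le_and_exists.mpr
    ⟨fun z hz => Submodule.mem_sup_left hz, x, Submodule.mem_sup_right hxI, hxA⟩
  rw [← Submodule.toSubalgebra_toSubmodule W one_mem mul_mem, hA.2 _ hAW,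
    Algebra.top_toSubmodule]

theorem exists_add_eq_of_sup_eq_top {I : Ideal B} (hAI : toSubmodule A ⊔ I.restrictScalars R = ⊤)
    (b : B) : ∃ a ∈ A, ∃ i ∈ I, a + i = b :=
  Submodule.mem_sup.mp (hAI ▸ Submodule.mem_top)

theorem mul_mem_of_pow_succ_subset {I : Ideal B} [I.IsTwoSided] (hA : IsCoatom A) {k : ℕ}
    (hk : 1 ≤ k) (hsucc : ∀ x ∈ I ^ (k + 1), x ∈ A) (hnot : ¬ ∀ x ∈ I ^ k, x ∈ A) :
    ∀ x ∈ I, ∀ y ∈ I, x * y ∈ A := by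
  have hsup := toSubmodule_sup_eq_top_of_isCoatom hA (I ^ k) hnot
  have split : ∀ x ∈ I, ∃ a ∈ A, a ∈ I ∧ ∃ u ∈ I ^ k, a + u = x := by
    intro x hx
    obtain ⟨a, ha, u, hu, rfl⟩ := exists_add_eq_of_sup_eq_top hsup x
    have huI : u ∈ I := pow_le_self (by omega) hu
    exact ⟨a, ha, by simpa using I.sub_mem hx huI, u, hu, rfl⟩
  intro x hx y hy
  obtain ⟨a, haA, haI, u, hu, rfl⟩ := split x hx
  obtain ⟨a', ha'A, ha'I, u', hu', rfl⟩ := split y hy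
  have hau' : a * u' ∈ A := hsucc _ (IsTwoSided.pow_succ (I := I) k ▸ mul_mem_mul haI hu')
  have hua' : u * a' ∈ A := hsucc _ (mul_mem_mul hu ha'I)
  have huu' : u * u' ∈ A :=
    hsucc _ (pow_le_pow_right (by omega) (IsTwoSided.pow_add (I := I) k k ▸ mul_mem_mul hu hu'))
  rw [show (a + u) * (a' + u') = a * a' + a * u' + u * a' + u * u' by noncomm_ring]
  exact add_mem (add_mem (add_mem (A.mul_mem haA ha'A) hau') hua') huu'

theorem mul_mem_of_isNilpotent (hA : IsCoatom A) {I : Ideal B} [I.IsTwoSided]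
    (hI : IsNilpotent I) : ∀ x ∈ I, ∀ y ∈ I, x * y ∈ A := by
  suffices ∀ k, (∀ x ∈ I ^ (k + 2), x ∈ A) → ∀ x ∈ I, ∀ y ∈ I, x * y ∈ A by
    obtain ⟨n, hn⟩ := hI
    refine this n fun x hx => ?_
    have hx0 : x ∈ I ^ n := pow_le_pow_right (Nat.le_add_right n 2) hx
    rw [hn, Submodule.zero_eq_bot, Submodule.mem_bot] at hx0
    exact hx0 ▸ A.zero_mem
  intro k
  induction k with
  | zero =>
    intro h x hx y hy
    have hxy : x * y ∈ I ^ 2 := by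
      rw [Submodule.pow_succ, Submodule.pow_one]
      exact mul_mem_mul hx hy
    exact h _ hxy
  | succ k ih =>
    intro hsucc
    by_cases hk : ∀ x ∈ I ^ (k + 2), x ∈ A
    · exact ih hk
    · exact mul_mem_of_pow_succ_subset hA (by omega) hsucc hk

theorem mul_mem_of_sup_eq_top {I : Ideal B}
    (hAI : toSubmodule A ⊔ I.restrictScalars R = ⊤) (hsq : ∀ x ∈ I, ∀ y ∈ I, x * y ∈ A)
    {x : B} (hxA : x ∈ A) (hxI : x ∈ I) (b : B) : b * x ∈ A ∧ x * b ∈ A := by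
  obtain ⟨c, hc, j, hj, rfl⟩ := exists_add_eq_of_sup_eq_top hAI b
  rw [add_mul, mul_add]
  exact ⟨add_mem (A.mul_mem hc hxA) (hsq j hj x hxI), add_mem (A.mul_mem hxA hc) (hsq x hxI j hj)⟩

theorem ideal_eq_of_sup_eq_top {H I : Ideal B} (hAH : toSubmodule A ⊔ H.restrictScalars R = ⊤)
    (hAI : ∀ x ∈ A, x ∈ I → x ∈ H) (hHI : H ≤ I) : H = I := by
  refine le_antisymm hHI fun x hxI => ?_
  obtain ⟨a, haA, h, hh, rfl⟩ := exists_add_eq_of_sup_eq_top hAH x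
  have haI : a ∈ I := by simpa using I.sub_mem hxI (hHI hh)
  exact H.add_mem (hAI a haA haI) hh

theorem coe_mem_jacobson_bot
    (hAJ : toSubmodule A ⊔ (jacobson (⊥ : Ideal B)).restrictScalars R = ⊤) {a : A}
    (ha : a ∈ jacobson (⊥ : Ideal A)) : (a : B) ∈ jacobson (⊥ : Ideal B) := by
  rw [mem_jacobson_iff]
  intro y
  obtain ⟨c, hc, j, hj, rfl⟩ := exists_add_eq_of_sup_eq_top hAJ y
  obtain ⟨z, hz⟩ := mem_jacobson_iff.mp ha ⟨c, hc⟩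
  have hz : (z : B) * (c * a + 1) = 1 := by
    rw [mem_bot, sub_eq_zero] at hz
    simpa [mul_add, mul_assoc] using congrArg Subtype.val hz
  obtain ⟨w, hw⟩ := exists_mul_add_sub_mem_of_mem_jacobson _
    (mul_mem_left _ (z : B) (mul_mem_right (a : B) _ hj))
  rw [mem_bot, sub_eq_zero] at hw
  refine ⟨w * z, ?_⟩
  rw [mem_bot]
  calc w * z * (c + j) * a + w * z - 1 = w * (z * (c * a + 1) + z * (j * a)) - 1 := by
        noncomm_ring
    _ = 0 := by rw [hz, add_comm, hw, sub_self]

theorem mem_jacobson_bot_of_coe_mem (hnil : ∀ x ∈ jacobson (⊥ : Ideal B), IsNilpotent x)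
    {a : A} (ha : (a : B) ∈ jacobson (⊥ : Ideal B)) : a ∈ jacobson (⊥ : Ideal A) := by
  rw [mem_jacobson_iff]
  intro y
  have hya : IsNilpotent (y * a) :=
    (IsNilpotent.map_iff (f := A.val) Subtype.val_injective).mp
      (hnil _ (mul_mem_left _ (y : B) ha))
  obtain ⟨u, hu⟩ := hya.isUnit_add_one
  refine ⟨↑u⁻¹, ?_⟩
  rw [mem_bot, mul_assoc, ← mul_add_one, ← hu, Units.inv_mul, sub_self]

end Subalgebra

/-- For a maximal subalgebra `A` of a finite-dimensional algebra `B` with `J(B) ⊄ A`: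
`J(A) = A ∩ J(B)`, `A ∩ J(B)` is a two-sided ideal of `B`, `J(B)² ⊆ J(A)`, and
`J(B)/J(A)` is a simple `B`-bimodule. -/
theorem stmt12 {K B : Type*} [Field K] [Ring B] [Algebra K B] [FiniteDimensional K B]
    (A : Subalgebra K B) (hmax : IsCoatom A)
    (hJ : ¬ ∀ x ∈ Ideal.jacobson (⊥ : Ideal B), x ∈ A) :
    (∀ a : A, a ∈ Ideal.jacobson (⊥ : Ideal A) ↔ (a : B) ∈ Ideal.jacobson (⊥ : Ideal B))
    ∧ (∀ x : B, x ∈ A ∧ x ∈ Ideal.jacobson (⊥ : Ideal B) → ∀ b : B,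
        (b * x ∈ A ∧ b * x ∈ Ideal.jacobson (⊥ : Ideal B))
        ∧ (x * b ∈ A ∧ x * b ∈ Ideal.jacobson (⊥ : Ideal B)))
    ∧ (∀ x ∈ Ideal.jacobson (⊥ : Ideal B), ∀ y ∈ Ideal.jacobson (⊥ : Ideal B), x * y ∈ A)
    ∧ (∀ H : Ideal B, (∀ x ∈ H, ∀ b : B, x * b ∈ H) →
        (∀ x : B, x ∈ A ∧ x ∈ Ideal.jacobson (⊥ : Ideal B) → x ∈ H) →
        H ≤ Ideal.jacobson (⊥ : Ideal B) →
        (∀ x ∈ H, x ∈ A) ∨ H = Ideal.jacobson (⊥ : Ideal B)) := by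
  have : IsArtinianRing B := IsArtinianRing.of_finite K B
  have hJnil := IsArtinianRing.isNilpotent_jacobson_bot (R := B)
  have hsq := Subalgebra.mul_mem_of_isNilpotent hmax hJnil
  have hsup := Subalgebra.toSubmodule_sup_eq_top_of_isCoatom hmax _ hJ
  refine ⟨fun a => ⟨Subalgebra.coe_mem_jacobson_bot hsup, Subalgebra.mem_jacobson_bot_of_coe_mem
      fun x hx => Ideal.isNilpotent_of_mem_of_isNilpotent hJnil hx⟩,
    fun x ⟨hxA, hxJ⟩ b => ?_, hsq, fun H hright hAH hHJ => ?_⟩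
  · obtain ⟨hbx, hxb⟩ := Subalgebra.mul_mem_of_sup_eq_top hsup hsq hxA hxJ b
    exact ⟨⟨hbx, Ideal.mul_mem_left _ b hxJ⟩, hxb, Ideal.mul_mem_right b _ hxJ⟩
  · have : H.IsTwoSided := ⟨fun b hx => hright _ hx b⟩
    by_cases hHA : ∀ x ∈ H, x ∈ A
    · exact Or.inl hHA
    · have hsupH := Subalgebra.toSubmodule_sup_eq_top_of_isCoatom hmax H hHA
      exact Or.inr (Subalgebra.ideal_eq_of_sup_eq_top hsupH (fun x hxA hxJ => hAH x ⟨hxA, hxJ⟩) hHJ)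
end

section
/- Let B be a finite-dimensional K-algebra such that B = A₀ ⊕ J(B) for a separable subalgebra A₀, and let A be a subalgebra of B containing J(B). Then the ring extension A ⊆ B is separable, i.e. the multiplication map B ⊗_A B → B is a split epimorphism of B-bimodules. -/
open TensorProduct

/-!
A separability idempotent `E` of `A₀` still works for `A ⊆ B`. Writing `b = a₀ + j` with
`a₀ ∈ A₀` and `j ∈ J(B)`, the commutator of `E` with `a₀` vanishes, and that with `j` dies in
`B ⊗_A B`: since `J(B) ⊆ A` is a two-sided ideal of `B`, the element `j` can be moved across the
tensor sign through every factor of `E`, so `j • E ≡ 1 ⊗ j ≡ j ⊗ 1 ≡ E • j` using `μ(E) = 1`.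
-/

section BalancingRelations

variable {K B : Type*} [CommRing K] [Ring B] [Algebra K B]

/-- The kernel of the canonical surjection `B ⊗[K] B → B ⊗[A] B`. -/
def balancingRelations (A : Subalgebra K B) : Submodule K (B ⊗[K] B) :=
  Submodule.span K {x : B ⊗[K] B |
    ∃ (b' c : B), ∃ a ∈ A, x = (b' * a) ⊗ₜ[K] c - b' ⊗ₜ[K] (a * c)}

variable {A : Subalgebra K B}

theorem mul_tmul_sub_tmul_mul_mem_balancingRelations {a : B} (ha : a ∈ A) (b c : B) :
    (b * a) ⊗ₜ[K] c - b ⊗ₜ[K] (a * c) ∈ balancingRelations A :=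
  Submodule.subset_span ⟨b, c, a, ha, rfl⟩

theorem one_tmul_sub_tmul_one_mem_balancingRelations {a : B} (ha : a ∈ A) :
    (1 : B) ⊗ₜ[K] a - a ⊗ₜ[K] (1 : B) ∈ balancingRelations A := by
  simpa using (balancingRelations A).neg_mem
    (mul_tmul_sub_tmul_mul_mem_balancingRelations ha 1 1)

theorem tmul_one_mul_sub_mem_balancingRelations {j : B} (hj : ∀ x, j * x ∈ A)
    (z : B ⊗[K] B) :
    (j ⊗ₜ[K] (1 : B)) * z - (1 : B) ⊗ₜ[K] (j * LinearMap.mul' K B z) ∈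
      balancingRelations A := by
  induction z using TensorProduct.induction_on with
  | zero => simp
  | tmul x y =>
    simpa [mul_assoc] using mul_tmul_sub_tmul_mul_mem_balancingRelations (hj x) 1 y
  | add z₁ z₂ h₁ h₂ =>
    simpa only [mul_add, map_add, tmul_add, add_sub_add_comm] using
      (balancingRelations A).add_mem h₁ h₂

theorem mul_one_tmul_sub_mem_balancingRelations {j : B} (hj : ∀ x, x * j ∈ A)
    (z : B ⊗[K] B) :
    z * ((1 : B) ⊗ₜ[K] j) - (LinearMap.mul' K B z * j) ⊗ₜ[K] (1 : B) ∈
      balancingRelations A := by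
  induction z using TensorProduct.induction_on with
  | zero => simp
  | tmul x y =>
    simpa [mul_assoc] using (balancingRelations A).neg_mem
      (mul_tmul_sub_tmul_mul_mem_balancingRelations (hj y) x 1)
  | add z₁ z₂ h₁ h₂ =>
    simpa only [add_mul, map_add, add_tmul, add_sub_add_comm] using
      (balancingRelations A).add_mem h₁ h₂

theorem tmul_one_mul_sub_mul_one_tmul_mem_balancingRelations {j : B}
    (hjl : ∀ x, x * j ∈ A) (hjr : ∀ x, j * x ∈ A) {E : B ⊗[K] B}
    (hE : LinearMap.mul' K B E = 1) :
    (j ⊗ₜ[K] (1 : B)) * E - E * ((1 : B) ⊗ₜ[K] j) ∈ balancingRelations A := by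
  have hjA : j ∈ A := by simpa using hjr 1
  have hdecomp : (j ⊗ₜ[K] (1 : B)) * E - E * ((1 : B) ⊗ₜ[K] j) =
      ((j ⊗ₜ[K] (1 : B)) * E - (1 : B) ⊗ₜ[K] (j * LinearMap.mul' K B E))
        + ((1 : B) ⊗ₜ[K] j - j ⊗ₜ[K] (1 : B))
        - (E * ((1 : B) ⊗ₜ[K] j) - (LinearMap.mul' K B E * j) ⊗ₜ[K] (1 : B)) := by
    rw [hE, mul_one, one_mul]
    abel
  rw [hdecomp]
  exact Submodule.sub_mem _
    (Submodule.add_mem _ (tmul_one_mul_sub_mem_balancingRelations hjr E)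
      (one_tmul_sub_tmul_one_mem_balancingRelations hjA))
    (mul_one_tmul_sub_mem_balancingRelations hjl E)

end BalancingRelations

theorem stmt13_general {K B : Type*} [Field K] [Ring B] [Algebra K B]
    (A₀ A : Subalgebra K B)
    (hcompl : IsCompl (Subalgebra.toSubmodule A₀)
      (Submodule.restrictScalars K (Ideal.jacobson (⊥ : Ideal B))))
    (hsep : ∃ E : B ⊗[K] B,
      E ∈ Submodule.span K {x : B ⊗[K] B | ∃ a ∈ A₀, ∃ b ∈ A₀, x = a ⊗ₜ[K] b} ∧
      LinearMap.mul' K B E = 1 ∧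
      ∀ a ∈ A₀, (a ⊗ₜ[K] (1 : B)) * E = E * ((1 : B) ⊗ₜ[K] a))
    (hJA : ∀ x ∈ Ideal.jacobson (⊥ : Ideal B), x ∈ A) :
    ∃ E' : B ⊗[K] B, LinearMap.mul' K B E' = 1 ∧
      ∀ b : B, (b ⊗ₜ[K] (1 : B)) * E' - E' * ((1 : B) ⊗ₜ[K] b) ∈
        Submodule.span K {x : B ⊗[K] B |
          ∃ (b' c : B), ∃ a ∈ A, x = (b' * a) ⊗ₜ[K] c - b' ⊗ₜ[K] (a * c)} := by
  obtain ⟨E, -, hE, hEcomm⟩ := hsep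
  refine ⟨E, hE, fun b => ?_⟩
  have hb : b ∈ Subalgebra.toSubmodule A₀ ⊔
      (Ideal.jacobson (⊥ : Ideal B)).restrictScalars K := by
    rw [hcompl.sup_eq_top]; trivial
  obtain ⟨a₀, ha₀, j, hj, rfl⟩ := Submodule.mem_sup.mp hb
  rw [Submodule.restrictScalars_mem] at hj
  have hjE : (j ⊗ₜ[K] (1 : B)) * E - E * ((1 : B) ⊗ₜ[K] j) ∈ balancingRelations A :=
    tmul_one_mul_sub_mul_one_tmul_mem_balancingRelations
      (fun x => hJA _ (Ideal.mul_mem_left _ x hj))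
      (fun x => hJA _ (Ideal.mul_mem_right x _ hj)) hE
  rw [add_tmul, tmul_add, add_mul, mul_add, add_sub_add_comm, hEcomm a₀ ha₀, sub_self,
    zero_add]
  exact hjE

/-- If `B = A₀ ⊕ J(B)` with `A₀` a separable subalgebra (given by a separability idempotent),
and `A` is a subalgebra containing `J(B)`, then the extension `A ⊆ B` is separable:
there is a separability element for the multiplication map `B ⊗_A B → B`, expressed via a
lift `E'` in `B ⊗[K] B` with `μ(E') = 1` and `bE' - E'b` lying in the kernel of
`B ⊗[K] B → B ⊗_A B`. -/
theorem stmt13 {K B : Type*} [Field K] [Ring B] [Algebra K B] [FiniteDimensional K B]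
    (A₀ A : Subalgebra K B)
    (hcompl : IsCompl (Subalgebra.toSubmodule A₀)
      (Submodule.restrictScalars K (Ideal.jacobson (⊥ : Ideal B))))
    (hsep : ∃ E : B ⊗[K] B,
      E ∈ Submodule.span K {x : B ⊗[K] B | ∃ a ∈ A₀, ∃ b ∈ A₀, x = a ⊗ₜ[K] b} ∧
      LinearMap.mul' K B E = 1 ∧
      ∀ a ∈ A₀, (a ⊗ₜ[K] (1 : B)) * E = E * ((1 : B) ⊗ₜ[K] a))
    (hJA : ∀ x ∈ Ideal.jacobson (⊥ : Ideal B), x ∈ A) :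
    ∃ E' : B ⊗[K] B, LinearMap.mul' K B E' = 1 ∧
      ∀ b : B, (b ⊗ₜ[K] (1 : B)) * E' - E' * ((1 : B) ⊗ₜ[K] b) ∈
        Submodule.span K {x : B ⊗[K] B |
          ∃ (b' c : B), ∃ a ∈ A, x = (b' * a) ⊗ₜ[K] c - b' ⊗ₜ[K] (a * c)} :=
  stmt13_general A₀ A hcompl hsep hJA
end

section
/- The maximal K-dimension of a proper unital subalgebra of M_n(K), for K algebraically closed and n ≥ 2, is n² − n + 1, attained by the block upper-triangular algebra B(1, n−1). -/
/-!
A proper subalgebra `A` of `End_K V`, with `K` algebraically closed, has an invariant subspace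
`0 ≠ W ≠ V` (Burnside's theorem), so `A` lies in the stabilizer of `W`. That stabilizer is the
kernel of the surjection `End_K V → Hom(W, V ⧸ W)`, `f ↦ (x ↦ f x mod W)`, hence has
codimension `k (n - k) ≥ n - 1` where `k = dim W`. A line `W = K eⱼ` attains the bound, and
its stabilizer is `B(1, n - 1)` for `j = 0`.
-/

open Module

namespace Submodule

variable {K V : Type*} [Field K] [AddCommGroup V] [Module K V]

def invtSubalgebra (W : Submodule K V) : Subalgebra K (End K V) :=
  (W.compatibleMaps W).toSubalgebra (fun _ hx ↦ hx) (fun _ _ hf hg _ hx ↦ hf (hg hx))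

variable {W : Submodule K V}

theorem mem_invtSubalgebra {f : End K V} : f ∈ W.invtSubalgebra ↔ ∀ x ∈ W, f x ∈ W :=
  Iff.rfl

variable (W)

def restrictMkQ : End K V →ₗ[K] W →ₗ[K] V ⧸ W :=
  LinearMap.llcomp K W V (V ⧸ W) W.mkQ ∘ₗ LinearMap.lcomp K V W.subtype

@[simp]
theorem restrictMkQ_apply (f : End K V) (x : W) : W.restrictMkQ f x = W.mkQ (f x) :=
  rfl

theorem ker_restrictMkQ :
    LinearMap.ker W.restrictMkQ = Subalgebra.toSubmodule W.invtSubalgebra := by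
  ext f
  simp only [LinearMap.mem_ker, Subalgebra.mem_toSubmodule, mem_invtSubalgebra, LinearMap.ext_iff,
    restrictMkQ_apply, mkQ_apply, Quotient.mk_eq_zero, LinearMap.zero_apply, Subtype.forall]

theorem restrictMkQ_surjective : Function.Surjective W.restrictMkQ := by
  intro g
  obtain ⟨s, hs⟩ := W.mkQ.exists_rightInverse_of_surjective W.range_mkQ
  obtain ⟨π, hπ⟩ := W.subtype.exists_leftInverse_of_injective W.ker_subtype
  refine ⟨s ∘ₗ g ∘ₗ π, LinearMap.ext fun x ↦ ?_⟩
  simpa [LinearMap.ext_iff] using congr($hs (g ($hπ x)))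

theorem finrank_invtSubalgebra_add_mul [FiniteDimensional K V] :
    finrank K W.invtSubalgebra + finrank K W * finrank K (V ⧸ W) = finrank K V ^ 2 := by
  have := W.restrictMkQ.finrank_range_add_finrank_ker
  rw [LinearMap.range_eq_top.mpr W.restrictMkQ_surjective, finrank_top, ker_restrictMkQ,
    finrank_linearMap, finrank_linearMap, Subalgebra.finrank_toSubmodule] at this
  rw [sq]
  omega

end Submodule

namespace Subalgebra

variable {K V : Type*} [Field K] [IsAlgClosed K] [AddCommGroup V] [Module K V]
  [FiniteDimensional K V]

/-- Burnside's theorem: by Schur's lemma `End_A V = K`, so Jacobson density makes every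
`K`-linear map an element of `A`. -/
theorem eq_top_of_isSimpleModule (A : Subalgebra K (End K V)) [IsSimpleModule A V] : A = ⊤ := by
  have schur := IsSimpleModule.algebraMap_end_bijective_of_isAlgClosed K (A := A) (V := V)
  have : Module.Finite (End A V) V := .of_restrictScalars_finite K _ _
  refine eq_top_iff.mpr fun f _ ↦ ?_
  let F : End (End A V) V :=
    { f with
      map_smul' φ x := by
        obtain ⟨c, rfl⟩ := schur.surjective φ
        exact f.map_smul c x }
  obtain ⟨a, ha⟩ := Module.Finite.toModuleEnd_moduleEnd_surjective F
  have : (a : End K V) = f := LinearMap.ext fun x ↦ congr($ha x)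
  exact this ▸ a.2

theorem exists_le_invtSubalgebra_of_ne_top (A : Subalgebra K (End K V)) (hA : A ≠ ⊤) :
    ∃ W : Submodule K V, W ≠ ⊥ ∧ W ≠ ⊤ ∧ A ≤ W.invtSubalgebra := by
  cases subsingleton_or_nontrivial V
  · exact absurd (Subsingleton.elim _ _) hA
  have : ¬ IsSimpleModule A V := fun _ ↦ hA A.eq_top_of_isSimpleModule
  obtain ⟨N, hN₀, hN₁⟩ : ∃ N : Submodule A V, N ≠ ⊥ ∧ N ≠ ⊤ := by
    contrapose! this
    exact { eq_bot_or_eq_top N := or_iff_not_imp_left.mpr (this N) }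
  refine ⟨N.restrictScalars K, by simpa, by simpa, fun a ha x hx ↦ ?_⟩
  exact N.smul_mem ⟨a, ha⟩ hx

theorem finrank_add_finrank_le_of_ne_top (A : Subalgebra K (End K V)) (hA : A ≠ ⊤) :
    finrank K A + finrank K V ≤ finrank K V ^ 2 + 1 := by
  obtain ⟨W, hW₀, hW₁, hAW⟩ := A.exists_le_invtSubalgebra_of_ne_top hA
  have hA_le : finrank K A ≤ finrank K W.invtSubalgebra :=
    Submodule.finrank_mono (Subalgebra.toSubmodule.monotone hAW)
  have hW_pos : finrank K W ≠ 0 := fun h ↦ hW₀ (Submodule.finrank_eq_zero.mp h)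
  have hW_lt : finrank K W < finrank K V := Submodule.finrank_lt hW₁
  have hdim := W.finrank_invtSubalgebra_add_mul
  rw [← W.finrank_quotient_add_finrank] at hdim hW_lt ⊢
  obtain ⟨k, hk⟩ := Nat.exists_eq_add_one.mpr (Nat.pos_of_ne_zero hW_pos)
  obtain ⟨q, hq⟩ := Nat.exists_eq_add_one.mpr (show 0 < finrank K (V ⧸ W) by omega)
  rw [hk, hq] at hdim ⊢
  nlinarith

end Subalgebra

theorem Pi.mem_span_single_one_iff {K ι : Type*} [Field K] [DecidableEq ι] {j : ι}
    {v : ι → K} :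
    v ∈ K ∙ Pi.single j 1 ↔ ∀ i, i ≠ j → v i = 0 := by
  rw [Submodule.mem_span_singleton]
  constructor
  · rintro ⟨c, rfl⟩ i hi
    simp [hi]
  · exact fun h ↦ ⟨v j, funext fun i ↦ by by_cases hi : i = j <;> simp_all⟩

namespace Matrix

variable {K ι : Type*} [Field K] [Fintype ι] [DecidableEq ι]

theorem finrank_subalgebra_le_of_ne_top [IsAlgClosed K] (A : Subalgebra K (Matrix ι ι K))
    (hA : A ≠ ⊤) : finrank K A ≤ Fintype.card ι ^ 2 - Fintype.card ι + 1 := by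
  let e := (toLinAlgEquiv' (R := K) (n := ι)).toAlgHom
  have hmap : A.map e ≠ ⊤ := fun h ↦ hA <| by
    rw [← Subalgebra.comap_map_eq_self_of_injective (f := e) toLinAlgEquiv'.injective A, h]
    exact Algebra.comap_top e
  have := (A.map e).finrank_add_finrank_le_of_ne_top hmap
  rw [← (toLinAlgEquiv'.subalgebraMap A).toLinearEquiv.finrank_eq,
    finrank_fintype_fun_eq_card] at this
  have := Nat.le_self_pow two_ne_zero (Fintype.card ι)
  omega

variable (K) in
def lineStabilizer (j : ι) : Subalgebra K (Matrix ι ι K) :=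
  (K ∙ (Pi.single j 1 : ι → K)).invtSubalgebra.comap toLinAlgEquiv'.toAlgHom

theorem coe_lineStabilizer (j : ι) :
    (lineStabilizer K j : Set (Matrix ι ι K)) = {X | ∀ i, i ≠ j → X i j = 0} := by
  ext X
  change K ∙ _ ≤ (K ∙ _).comap (toLin' X) ↔ _
  rw [Submodule.span_singleton_le_iff_mem, Submodule.mem_comap, toLin'_apply, mulVec_single_one,
    Pi.mem_span_single_one_iff]
  rfl

theorem finrank_lineStabilizer (j : ι) :
    finrank K (lineStabilizer K j) = Fintype.card ι ^ 2 - Fintype.card ι + 1 := by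
  let W := K ∙ (Pi.single j 1 : ι → K)
  have hmap : (lineStabilizer K j).map toLinAlgEquiv'.toAlgHom = W.invtSubalgebra :=
    Subalgebra.map_comap_eq_self_of_surjective toLinAlgEquiv'.surjective _
  have hdim := W.finrank_invtSubalgebra_add_mul
  rw [Submodule.finrank_quotient, finrank_span_singleton (by simp), finrank_fintype_fun_eq_card,
    ← hmap, ← (toLinAlgEquiv'.subalgebraMap _).toLinearEquiv.finrank_eq] at hdim
  have := Fintype.card_pos_iff.mpr ⟨j⟩
  have := Nat.le_self_pow two_ne_zero (Fintype.card ι)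
  omega

theorem lineStabilizer_ne_top [Nontrivial ι] (j : ι) : lineStabilizer K j ≠ ⊤ := by
  obtain ⟨i, hi⟩ := exists_ne j
  intro h
  have hmem : single i j (1 : K) ∈ lineStabilizer K j := h ▸ Algebra.mem_top
  rw [← SetLike.mem_coe, coe_lineStabilizer] at hmem
  simpa using hmem i hi

end Matrix

/-- For `K` algebraically closed and `n ≥ 2`, the maximal dimension of a proper unital
subalgebra of `Mₙ(K)` is `n² - n + 1`, attained by the block upper-triangular algebra
`B(1, n-1)`. -/
theorem stmt18 {K : Type*} [Field K] [IsAlgClosed K] (n : ℕ) (hn : 2 ≤ n) :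
    IsGreatest {d : ℕ | ∃ A : Subalgebra K (Matrix (Fin n) (Fin n) K),
        A ≠ ⊤ ∧ Module.finrank K A = d} (n ^ 2 - n + 1)
    ∧ ∃ A : Subalgebra K (Matrix (Fin n) (Fin n) K),
        (A : Set (Matrix (Fin n) (Fin n) K))
          = {X | ∀ i : Fin n, i ≠ ⟨0, by omega⟩ → X i ⟨0, by omega⟩ = 0}
        ∧ A ≠ ⊤ ∧ Module.finrank K A = n ^ 2 - n + 1 := by
  let B := Matrix.lineStabilizer K (⟨0, by omega⟩ : Fin n)
  have hB : finrank K B = n ^ 2 - n + 1 := by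
    simpa using Matrix.finrank_lineStabilizer (K := K) (⟨0, by omega⟩ : Fin n)
  have : Nontrivial (Fin n) := Fin.nontrivial_iff_two_le.mpr hn
  have hB_ne : B ≠ ⊤ := Matrix.lineStabilizer_ne_top _
  refine ⟨⟨⟨B, hB_ne, hB⟩, ?_⟩, B, Matrix.coe_lineStabilizer _, hB_ne, hB⟩
  rintro d ⟨A, hA, rfl⟩
  simpa using Matrix.finrank_subalgebra_le_of_ne_top A hA
end

section
/- In the algebra B = F₂[X,Y]/(X²,Y⁴), the subalgebras A = span{1, X} and A' = span{1, Y²} are isomorphic as F₂-algebras, but there is no F₂-algebra automorphism α of B with α(A) = A'. -/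
/-!
Both `x` and `y²` are nonzero with square zero, so each has minimal polynomial `T²` and
generates a copy of `F₂[T]/(T²)`. Over `F₂` the Frobenius `z ↦ z²` is an algebra endomorphism,
so `F₂[y²]` consists of squares, and an automorphism carrying `F₂[x]` onto it would make `x` a
square. But `x` is not a square: `B → F₂[ε]`, `x ↦ ε`, `y ↦ 0` sends squares to `F₂`.
-/

open Polynomial

section SquareZero

variable {K S T : Type*} [Field K] [CommRing S] [Algebra K S] [CommRing T] [Algebra K T]

theorem minpoly_eq_X_sq_of_sq_eq_zero {t : S} (ht : t ^ 2 = 0) (h0 : t ≠ 0) :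
    minpoly K t = X ^ 2 := by
  have : Nontrivial S := nontrivial_of_ne t 0 h0
  have hint : IsIntegral K t := IsIntegral.of_pow two_pos (ht ▸ isIntegral_zero)
  have hdvd : minpoly K t ∣ X ^ 2 := minpoly.dvd K t (by simp [ht])
  obtain ⟨k, hk, hassoc⟩ := (dvd_prime_pow prime_X 2).mp hdvd
  have hmin : minpoly K t = X ^ k :=
    eq_of_monic_of_associated (minpoly.monic hint) (monic_X_pow k) hassoc
  interval_cases k
  · exact absurd hmin (minpoly.ne_one K t)
  · exact absurd (by simpa [hmin] using minpoly.aeval K t) h0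
  · exact hmin

noncomputable def adjoinSingletonEquivOfMinpolyEq {s : S} {t : T} (hs : IsIntegral K s)
    (ht : IsIntegral K t) (h : minpoly K s = minpoly K t) :
    Algebra.adjoin K {s} ≃ₐ[K] Algebra.adjoin K {t} :=
  (Algebra.adjoin.powerBasis hs).equivOfMinpoly (Algebra.adjoin.powerBasis ht) <| by
    rwa [Algebra.adjoin.powerBasis_gen, Algebra.adjoin.powerBasis_gen,
      ← minpoly.algHom_eq (Algebra.adjoin K {s}).val Subtype.val_injective,
      ← minpoly.algHom_eq (Algebra.adjoin K {t}).val Subtype.val_injective]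

noncomputable def adjoinSingletonEquivOfSqEqZero {s : S} {t : T} (hs : s ^ 2 = 0) (hs0 : s ≠ 0)
    (ht : t ^ 2 = 0) (ht0 : t ≠ 0) : Algebra.adjoin K {s} ≃ₐ[K] Algebra.adjoin K {t} :=
  adjoinSingletonEquivOfMinpolyEq (.of_pow two_pos (hs ▸ isIntegral_zero))
    (.of_pow two_pos (ht ▸ isIntegral_zero))
    ((minpoly_eq_X_sq_of_sq_eq_zero hs hs0).trans (minpoly_eq_X_sq_of_sq_eq_zero ht ht0).symm)

end SquareZero

section Frobenius

variable {K R : Type*} [Field K] [Fintype K] [CommRing R] [Algebra K R]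

theorem adjoin_pow_card_le_range_frobeniusAlgHom (y : R) :
    Algebra.adjoin K {y ^ Fintype.card K} ≤ (FiniteField.frobeniusAlgHom K R).range :=
  Algebra.adjoin_le (Set.singleton_subset_iff.mpr ⟨y, rfl⟩)

theorem exists_pow_card_eq_of_map_adjoin_eq (α : R ≃ₐ[K] R) {x y : R}
    (h : (Algebra.adjoin K {x}).map α.toAlgHom = Algebra.adjoin K {y ^ Fintype.card K}) :
    ∃ z, z ^ Fintype.card K = x := by
  have hαx : α x ∈ (FiniteField.frobeniusAlgHom K R).range :=
    adjoin_pow_card_le_range_frobeniusAlgHom y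
      (h ▸ Subalgebra.mem_map.mpr ⟨x, Algebra.self_mem_adjoin_singleton K x, rfl⟩)
  obtain ⟨w, hw⟩ := hαx
  change w ^ Fintype.card K = α x at hw
  exact ⟨α.symm w, by rw [← map_pow, hw, α.symm_apply_apply]⟩

end Frobenius

theorem DualNumber.sq_ne_eps {R : Type*} [CommRing R] [CharP R 2] (w : DualNumber R) :
    w ^ 2 ≠ DualNumber.eps := by
  have : Nontrivial R := CharP.nontrivial_of_char_ne_one (R := R) (v := 2) (by norm_num)
  intro h
  have hsnd := congrArg TrivSqZeroExt.snd h
  rw [TrivSqZeroExt.snd_pow, DualNumber.snd_eps, nsmul_eq_mul, Nat.cast_ofNat,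
    CharTwo.two_eq_zero, zero_mul] at hsnd
  exact zero_ne_one hsnd

namespace TruncatedBivariate

abbrev F : Type := ZMod 2

noncomputable abbrev B : Type :=
  MvPolynomial (Fin 2) F ⧸ Ideal.span {(MvPolynomial.X 0 : MvPolynomial (Fin 2) F) ^ 2,
    (MvPolynomial.X 1 : MvPolynomial (Fin 2) F) ^ 4}

noncomputable abbrev x : B := Ideal.Quotient.mk _ (MvPolynomial.X 0)

noncomputable abbrev y : B := Ideal.Quotient.mk _ (MvPolynomial.X 1)

noncomputable def lift {S : Type*} [CommRing S] [Algebra F S] (u v : S) (hu : u ^ 2 = 0)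
    (hv : v ^ 4 = 0) : B →ₐ[F] S :=
  Ideal.Quotient.liftₐ _ (MvPolynomial.aeval ![u, v]) fun p hp => by
    suffices h : _ ≤ RingHom.ker (MvPolynomial.aeval (R := F) ![u, v]) from
      RingHom.mem_ker.mp (h hp)
    rw [Ideal.span_le, Set.insert_subset_iff, Set.singleton_subset_iff]
    simp [hu, hv]

section lift

variable {S : Type*} [CommRing S] [Algebra F S] (u v : S) (hu : u ^ 2 = 0) (hv : v ^ 4 = 0)

theorem lift_x : lift u v hu hv x = u :=
  MvPolynomial.aeval_X ![u, v] 0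

theorem lift_y : lift u v hu hv y = v :=
  MvPolynomial.aeval_X ![u, v] 1

end lift

theorem x_sq : x ^ 2 = 0 := by
  rw [← map_pow, Ideal.Quotient.eq_zero_iff_mem]
  exact Ideal.subset_span (Set.mem_insert _ _)

theorem y_sq_sq : (y ^ 2) ^ 2 = 0 := by
  rw [← pow_mul, ← map_pow, Ideal.Quotient.eq_zero_iff_mem]
  exact Ideal.subset_span (Set.mem_insert_of_mem _ rfl)

theorem sq_ne_x (z : B) : z ^ 2 ≠ x := fun h =>
  DualNumber.sq_ne_eps
    (lift (DualNumber.eps : DualNumber F) 0 (by rw [sq, DualNumber.eps_mul_eps])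
      (zero_pow four_ne_zero) z)
    (by rw [← map_pow, h, lift_x])

theorem x_ne_zero : x ≠ 0 := fun h => sq_ne_x 0 (by rw [h, zero_pow two_ne_zero])

theorem y_sq_ne_zero : y ^ 2 ≠ 0 := by
  intro h
  have := congrArg (lift 0 (AdjoinRoot.root (X ^ 4 : F[X])) (zero_pow two_ne_zero)
    (by rw [← AdjoinRoot.mk_X, ← map_pow, AdjoinRoot.mk_self])) h
  rw [map_pow, lift_y, map_zero, ← AdjoinRoot.mk_X, ← map_pow, AdjoinRoot.mk_eq_zero,
    pow_dvd_pow_iff X_ne_zero not_isUnit_X] at this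
  omega

end TruncatedBivariate

open TruncatedBivariate in
/-- In `B = F₂[X,Y]/(X², Y⁴)`, the subalgebras `F₂[x] = span{1, x}` and
`F₂[y²] = span{1, y²}` are isomorphic as `F₂`-algebras, but no algebra automorphism of `B`
carries one to the other. -/
theorem stmt19 :
    let Bb := MvPolynomial (Fin 2) (ZMod 2) ⧸
      Ideal.span {(MvPolynomial.X 0 : MvPolynomial (Fin 2) (ZMod 2)) ^ 2,
        (MvPolynomial.X 1 : MvPolynomial (Fin 2) (ZMod 2)) ^ 4}
    let x : Bb := Ideal.Quotient.mk _ (MvPolynomial.X 0)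
    let y : Bb := Ideal.Quotient.mk _ (MvPolynomial.X 1)
    let A := Algebra.adjoin (ZMod 2) {x}
    let A' := Algebra.adjoin (ZMod 2) {y ^ 2}
    Nonempty (A ≃ₐ[ZMod 2] A')
    ∧ ¬ ∃ α : Bb ≃ₐ[ZMod 2] Bb, Subalgebra.map α.toAlgHom A = A' := by
  intro Bb x y A A'
  refine ⟨⟨adjoinSingletonEquivOfSqEqZero x_sq x_ne_zero y_sq_sq y_sq_ne_zero⟩, ?_⟩
  rintro ⟨α, hα⟩
  obtain ⟨z, hz⟩ := exists_pow_card_eq_of_map_adjoin_eq α (y := y) (by rwa [ZMod.card])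
  exact sq_ne_x z (by rwa [ZMod.card] at hz)
end
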